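/- arXiv:math/0305069 — 9 statements merged into one kernel-verified Lean document; each statement's English description precedes it below -/
import Mathlib

section
/- Let T ∈ Λᵏ(ℝⁿ) be a constant exterior form and ψ₀ ∈ Δₙ a spinor annihilated by the holonomy algebra h*_T = [g*_T, g*_T], where g*_T ⊂ cl(ℝⁿ) is the Lie algebra generated by all elements X ⌟ T with X ∈ ℝⁿ. Then the spinor field ψ(m) := Exp(−m ⌟ T)·ψ₀ satisfies X(ψ) + (X ⌟ T)·ψ = 0 for all X ∈ ℝⁿ, i.e. it is ∇^T-parallel. -/
/-!  The spinor module `Δₙ` is modelled as a complex Banach space `Δ` with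
continuous endomorphisms `c i` (Clifford multiplication by the basis vectors of
`ℝⁿ`) satisfying the Clifford relations.  A constant exterior `k`-form `T` on
`ℝⁿ` is encoded by its coefficients `a : Finset (Fin n) → ℝ` supported on sets
of cardinality `k`; Clifford multiplication by it is `cliffordOpL`, and
`interiorV X a` is the coefficient description of the interior product `X ⌟ T`. -/

open Finset

attribute [local instance 100] LieRing.ofAssociativeRing

/-- Clifford multiplication by the exterior form with coefficients `a`. -/
noncomputable def cliffordOpL {n : ℕ} {Δ : Type*} [NormedAddCommGroup Δ]
    [NormedSpace ℂ Δ] (c : Fin n → (Δ →L[ℂ] Δ)) (a : Finset (Fin n) → ℝ) :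
    Δ →L[ℂ] Δ :=
  ∑ s : Finset (Fin n), ((a s : ℝ) : ℂ) • ((s.sort (· ≤ ·)).map c).prod

/-- Interior product `X ⌟ T` in coefficients. -/
def interiorV {n : ℕ} (X : Fin n → ℝ) (a : Finset (Fin n) → ℝ) :
    Finset (Fin n) → ℝ :=
  fun s => ∑ m : Fin n,
    if m ∈ s then 0
    else (-1 : ℝ) ^ ((s.filter (· < m)).card) * X m * a (insert m s)

/-- The Lie algebra `g*_T ⊆ cl(ℝⁿ)`, generated by the elements `X ⌟ T`,
`X ∈ ℝⁿ`, acting on spinors. -/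
noncomputable def gStar {n : ℕ} {Δ : Type*} [NormedAddCommGroup Δ]
    [NormedSpace ℂ Δ] (c : Fin n → (Δ →L[ℂ] Δ)) (T : Finset (Fin n) → ℝ) :
    LieSubalgebra ℂ (Δ →L[ℂ] Δ) :=
  LieSubalgebra.lieSpan ℂ (Δ →L[ℂ] Δ)
    {z | ∃ X : Fin n → ℝ, z = cliffordOpL c (interiorV X T)}

/-!
The spinors annihilated by `h*_T = [g*_T, g*_T]` form a closed subspace `W` containing `ψ₀`; it is
`g*_T`-invariant because `h*_T` is an ideal of `g*_T`, and on it the operators `X ⌟ T` commute.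
Restricted to `W`, `p ↦ Exp(-p ⌟ T)` is thus the exponential of a commuting linear family, so
`Exp(-p ⌟ T) = Exp(-(p - m) ⌟ T) Exp(-m ⌟ T)`, whose derivative at `p = m` in the direction `X`
is `-(X ⌟ T) Exp(-m ⌟ T)`.
-/

open NormedSpace

section InteriorClifford

variable {n : ℕ}

theorem interiorV_add (X Y : Fin n → ℝ) (a : Finset (Fin n) → ℝ) :
    interiorV (X + Y) a = interiorV X a + interiorV Y a := by
  funext s
  simp only [interiorV, Pi.add_apply, ← Finset.sum_add_distrib]
  refine Finset.sum_congr rfl fun m _ => ?_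
  split_ifs <;> ring

theorem interiorV_smul (r : ℝ) (X : Fin n → ℝ) (a : Finset (Fin n) → ℝ) :
    interiorV (r • X) a = r • interiorV X a := by
  funext s
  simp only [interiorV, Pi.smul_apply, smul_eq_mul, Finset.mul_sum]
  refine Finset.sum_congr rfl fun m _ => ?_
  split_ifs <;> ring

variable {Δ : Type*} [NormedAddCommGroup Δ] [NormedSpace ℂ Δ] (c : Fin n → (Δ →L[ℂ] Δ))

theorem cliffordOpL_add (a b : Finset (Fin n) → ℝ) :
    cliffordOpL c (a + b) = cliffordOpL c a + cliffordOpL c b := by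
  simp only [cliffordOpL, Pi.add_apply, Complex.ofReal_add, add_smul, Finset.sum_add_distrib]

theorem cliffordOpL_smul (r : ℝ) (a : Finset (Fin n) → ℝ) :
    cliffordOpL c (r • a) = r • cliffordOpL c a := by
  simp only [cliffordOpL, Pi.smul_apply, smul_eq_mul, Complex.ofReal_mul, mul_smul,
    Complex.coe_smul, Finset.smul_sum]

noncomputable def interiorCliffordL (T : Finset (Fin n) → ℝ) :
    EuclideanSpace ℝ (Fin n) →L[ℝ] (Δ →L[ℂ] Δ) :=
  LinearMap.toContinuousLinearMap
    { toFun := fun X => cliffordOpL c (interiorV X T)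
      map_add' := fun X Y => by
        simp only [WithLp.ofLp_add, interiorV_add, cliffordOpL_add]
      map_smul' := fun r X => by
        simp only [WithLp.ofLp_smul, interiorV_smul, cliffordOpL_smul, RingHom.id_apply] }

@[simp]
theorem interiorCliffordL_apply (T : Finset (Fin n) → ℝ) (X : EuclideanSpace ℝ (Fin n)) :
    interiorCliffordL c T X = cliffordOpL c (interiorV X T) :=
  rfl

theorem interiorCliffordL_mem_gStar (T : Finset (Fin n) → ℝ) (X : EuclideanSpace ℝ (Fin n)) :
    interiorCliffordL c T X ∈ gStar c T :=
  LieSubalgebra.subset_lieSpan ⟨X, rfl⟩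

end InteriorClifford

theorem hasFDerivAt_exp_of_commute {𝕂 E 𝔸 : Type*} [RCLike 𝕂] [NormedAddCommGroup E]
    [NormedSpace 𝕂 E] [NormedRing 𝔸] [NormedAlgebra 𝕂 𝔸] [CompleteSpace 𝔸]
    (R : E →L[𝕂] 𝔸) (hR : ∀ p q, Commute (R p) (R q)) (m : E) :
    HasFDerivAt (fun p => exp (R p)) (MulOpposite.op (exp (R m)) • R) m := by
  let : NormedAlgebra ℚ 𝔸 := NormedAlgebra.restrictScalars ℚ 𝕂 𝔸
  have hsplit : (fun p => exp (R p)) = fun p => exp (R (p - m)) * exp (R m) := by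
    funext p
    rw [← exp_add_of_commute (hR (p - m) m), ← map_add, sub_add_cancel]
  have hshift : HasFDerivAt (fun p => exp (R (p - m))) R m := by
    have hR0 : HasFDerivAt (fun p => R (p - m)) R m :=
      R.hasFDerivAt.comp m ((hasFDerivAt_id m).sub_const m)
    have hexp : HasFDerivAt exp (1 : 𝔸 →L[𝕂] 𝔸) (R (m - m)) := by
      rw [sub_self, map_zero]
      exact hasFDerivAt_exp_zero
    simpa only [Function.comp_def, ContinuousLinearMap.one_def, ContinuousLinearMap.id_comp]
      using hexp.comp m hR0
  rw [hsplit]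
  exact hshift.mul_const' _

theorem ContinuousLinearMap.comp_exp_eq_exp_comp {𝕂 V W : Type*} [RCLike 𝕂]
    [NormedAddCommGroup V] [NormedSpace 𝕂 V] [CompleteSpace V]
    [NormedAddCommGroup W] [NormedSpace 𝕂 W] [CompleteSpace W]
    (ι : W →L[𝕂] V) {f : V →L[𝕂] V} {g : W →L[𝕂] W} (h : ι ∘L g = f ∘L ι) :
    ι ∘L exp g = exp f ∘L ι := by
  have hpow : ∀ k : ℕ, ι ∘L (g ^ k) = (f ^ k) ∘L ι := by
    intro k
    induction k with
    | zero => rfl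
    | succ k ih =>
      rw [pow_succ, pow_succ, ContinuousLinearMap.mul_def, ContinuousLinearMap.mul_def,
        ← ContinuousLinearMap.comp_assoc, ih, ContinuousLinearMap.comp_assoc, h,
        ContinuousLinearMap.comp_assoc]
  have hg := (exp_series_hasSum_exp' (𝕂 := 𝕂) g).mapL (compL 𝕂 W W V ι)
  have hf := (exp_series_hasSum_exp' (𝕂 := 𝕂) f).mapL ((compL 𝕂 W V V).flip ι)
  simp only [compL_apply, flip_apply, comp_smul, smul_comp, hpow] at hg hf
  exact hg.unique hf

theorem hasFDerivAt_exp_apply_of_intertwines {E V W : Type*} [NormedAddCommGroup E]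
    [NormedSpace ℝ E] [NormedAddCommGroup V] [NormedSpace ℂ V] [CompleteSpace V]
    [NormedAddCommGroup W] [NormedSpace ℂ W] [CompleteSpace W]
    (B : E →L[ℝ] (V →L[ℂ] V)) (ι : W →L[ℂ] V) (R : E →L[ℝ] (W →L[ℂ] W))
    (hR : ∀ p q, Commute (R p) (R q)) (hι : ∀ p, ι ∘L R p = B p ∘L ι) (w : W) (m : E) :
    HasFDerivAt (fun p => exp (B p) (ι w))
      ((ContinuousLinearMap.apply ℂ V (exp (B m) (ι w))).restrictScalars ℝ ∘L B) m := by
  have hexp : ∀ p, ι (exp (R p) w) = exp (B p) (ι w) := fun p =>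
    congr($(ι.comp_exp_eq_exp_comp (hι p)) w)
  have hd := ((ι ∘L ContinuousLinearMap.apply ℂ W w).restrictScalars ℝ).hasFDerivAt.comp m
    (hasFDerivAt_exp_of_commute R hR m)
  simp only [Function.comp_def, ContinuousLinearMap.coe_restrictScalars',
    ContinuousLinearMap.comp_apply, ContinuousLinearMap.apply_apply, hexp] at hd
  convert hd using 1
  ext X
  change B X (exp (B m) (ι w)) = ι (R X (exp (R m) w))
  rw [← hexp, ← ContinuousLinearMap.comp_apply, ← hι, ContinuousLinearMap.comp_apply]

section BracketAnnihilator

variable {𝕜 V : Type*} [NontriviallyNormedField 𝕜] [NormedAddCommGroup V] [NormedSpace 𝕜 V]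
  (L : LieSubalgebra 𝕜 (V →L[𝕜] V))

/-- The annihilator of the derived algebra `[L, L]`. -/
def bracketAnnihilator : Submodule 𝕜 V where
  carrier := {ψ | ∀ a b : V →L[𝕜] V, a ∈ L → b ∈ L → ⁅a, b⁆ ψ = 0}
  add_mem' hx hy a b ha hb := by rw [map_add, hx a b ha hb, hy a b ha hb, add_zero]
  zero_mem' _ _ _ _ := map_zero _
  smul_mem' r x hx a b ha hb := by rw [map_smul, hx a b ha hb, smul_zero]

theorem mem_bracketAnnihilator {ψ : V} :
    ψ ∈ bracketAnnihilator L ↔ ∀ a b : V →L[𝕜] V, a ∈ L → b ∈ L → ⁅a, b⁆ ψ = 0 :=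
  Iff.rfl

theorem isClosed_bracketAnnihilator : IsClosed (bracketAnnihilator L : Set V) := by
  have : (bracketAnnihilator L : Set V) =
      ⋂ (a : V →L[𝕜] V) (b : V →L[𝕜] V) (_ : a ∈ L) (_ : b ∈ L), {ψ | ⁅a, b⁆ ψ = 0} := by
    ext ψ
    simp only [SetLike.mem_coe, mem_bracketAnnihilator, Set.mem_iInter, Set.mem_ofPred_eq]
  rw [this]
  exact isClosed_iInter fun a => isClosed_iInter fun b => isClosed_iInter fun _ =>
    isClosed_iInter fun _ => isClosed_eq (map_continuous _) continuous_const

variable {L}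

theorem apply_mem_bracketAnnihilator {g : V →L[𝕜] V} (hg : g ∈ L) {ψ : V}
    (hψ : ψ ∈ bracketAnnihilator L) : g ψ ∈ bracketAnnihilator L := by
  intro a b ha hb
  have hcomm : ⁅a, b⁆ (g ψ) = g (⁅a, b⁆ ψ) + ⁅⁅a, b⁆, g⁆ ψ := by
    simp only [Ring.lie_def, sub_apply, mul_apply_eq_comp, map_sub]
    abel
  rw [hcomm, hψ a b ha hb, hψ _ g (L.lie_mem ha hb) hg, map_zero, add_zero]

theorem apply_apply_comm_of_mem_bracketAnnihilator {a b : V →L[𝕜] V} (ha : a ∈ L) (hb : b ∈ L)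
    {ψ : V} (hψ : ψ ∈ bracketAnnihilator L) : a (b ψ) = b (a ψ) := by
  have h := hψ a b ha hb
  rwa [Ring.lie_def, sub_apply, sub_eq_zero] at h

end BracketAnnihilator

noncomputable def restrictFamily {E V : Type*} [NormedAddCommGroup E] [NormedSpace ℝ E]
    [NormedAddCommGroup V] [NormedSpace ℂ V] (B : E →L[ℝ] (V →L[ℂ] V)) {W : Submodule ℂ V}
    (hW : ∀ p, ∀ w ∈ W, B p w ∈ W) : E →L[ℝ] (W →L[ℂ] W) :=
  LinearMap.mkContinuous
    { toFun := fun p => (B p).restrict (hW p)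
      map_add' := fun p q => by ext; simp
      map_smul' := fun r p => by ext; simp }
    ‖B‖ fun p => ContinuousLinearMap.opNorm_le_bound _ (by positivity) fun w => by
      calc ‖(B p).restrict (hW p) w‖ = ‖B p w‖ := rfl
        _ ≤ ‖B p‖ * ‖w‖ := (B p).le_opNorm w
        _ ≤ ‖B‖ * ‖p‖ * ‖w‖ := by gcongr; exact B.le_opNorm p

theorem hasFDerivAt_exp_apply_of_mem_bracketAnnihilator {E V : Type*}
    [NormedAddCommGroup E] [NormedSpace ℝ E] [NormedAddCommGroup V] [NormedSpace ℂ V]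
    [CompleteSpace V] {L : LieSubalgebra ℂ (V →L[ℂ] V)} (B : E →L[ℝ] (V →L[ℂ] V))
    (hB : ∀ p, B p ∈ L) {ψ₀ : V} (hψ₀ : ψ₀ ∈ bracketAnnihilator L) (m : E) :
    HasFDerivAt (fun p => exp (B p) ψ₀)
      ((ContinuousLinearMap.apply ℂ V (exp (B m) ψ₀)).restrictScalars ℝ ∘L B) m := by
  have : CompleteSpace (bracketAnnihilator L) :=
    (isClosed_bracketAnnihilator L).completeSpace_coe
  have hW : ∀ p, ∀ ψ ∈ bracketAnnihilator L, B p ψ ∈ bracketAnnihilator L := fun p _ hψ =>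
    apply_mem_bracketAnnihilator (hB p) hψ
  have hR : ∀ p q, Commute (restrictFamily B hW p) (restrictFamily B hW q) := fun p q => by
    ext w
    exact apply_apply_comm_of_mem_bracketAnnihilator (hB p) (hB q) w.2
  exact hasFDerivAt_exp_apply_of_intertwines B (bracketAnnihilator L).subtypeL _ hR
    (fun _ => rfl) ⟨ψ₀, hψ₀⟩ m

theorem exp_spinor_field_parallel_general
    (n : ℕ) (Δ : Type*) [NormedAddCommGroup Δ] [NormedSpace ℂ Δ]
    [CompleteSpace Δ]
    (c : Fin n → (Δ →L[ℂ] Δ))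
    (T : Finset (Fin n) → ℝ)
    (ψ₀ : Δ)
    (hhol : ∀ a b : Δ →L[ℂ] Δ, a ∈ gStar c T → b ∈ gStar c T →
        ⁅a, b⁆ ψ₀ = 0) :
    ∀ m X : EuclideanSpace ℝ (Fin n),
      fderiv ℝ (fun p : EuclideanSpace ℝ (Fin n) =>
          (NormedSpace.exp (-(cliffordOpL c (interiorV p T)))) ψ₀) m X
        + (cliffordOpL c (interiorV X T))
            ((NormedSpace.exp (-(cliffordOpL c (interiorV m T)))) ψ₀) = 0 := by
  intro m X
  have h := (hasFDerivAt_exp_apply_of_mem_bracketAnnihilator (-interiorCliffordL c T)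
    (fun p => neg_mem (interiorCliffordL_mem_gStar c T p)) hhol m).fderiv
  simp only [neg_apply, interiorCliffordL_apply] at h
  simp [h]

/-- Let `T` be a constant exterior `k`-form on `ℝⁿ` and
`ψ₀ ∈ Δₙ` a spinor annihilated by the holonomy algebra
`h*_T = [g*_T, g*_T]`.  Then the spinor field `ψ(m) = Exp(−m ⌟ T)·ψ₀`
satisfies `X(ψ) + (X ⌟ T)·ψ = 0` for all `X ∈ ℝⁿ`, i.e. it is
`∇^T`-parallel. -/
theorem exp_spinor_field_parallel
    (n k : ℕ) (Δ : Type*) [NormedAddCommGroup Δ] [NormedSpace ℂ Δ]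
    [CompleteSpace Δ]
    (c : Fin n → (Δ →L[ℂ] Δ))
    (hrel : ∀ i j : Fin n,
        c i * c j + c j * c i = if i = j then (-2 : ℂ) • 1 else 0)
    (T : Finset (Fin n) → ℝ) (hT : ∀ s, T s ≠ 0 → s.card = k)
    (ψ₀ : Δ)
    (hhol : ∀ a b : Δ →L[ℂ] Δ, a ∈ gStar c T → b ∈ gStar c T →
        ⁅a, b⁆ ψ₀ = 0) :
    ∀ m X : EuclideanSpace ℝ (Fin n),
      fderiv ℝ (fun p : EuclideanSpace ℝ (Fin n) =>
          (NormedSpace.exp (-(cliffordOpL c (interiorV p T)))) ψ₀) m X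
        + (cliffordOpL c (interiorV X T))
            ((NormedSpace.exp (-(cliffordOpL c (interiorV m T)))) ψ₀) = 0 :=
  exp_spinor_field_parallel_general n Δ c T ψ₀ hhol
end

section
/- Let T ∈ Λ³(ℝⁿ) be a 3-form and Φ_T: ℝⁿ → so(n) the map Φ_T(X) = X ⌟ T. Then T lies in Λ³ of the orthogonal complement of the kernel of Φ_T. In particular, if T cannot be reduced to a proper subspace of ℝⁿ, then n ≤ dim g*_T, where g*_T is the Lie algebra generated by the image of Φ_T. -/
/-- For a 3-form `T` on `ℝⁿ` (given by its alternating coefficients w.r.t. the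
standard basis) and a vector `X`, the 2-form `X ⌟ T` viewed as a matrix
(an element of `so(n)`): `(X ⌟ T)_{jk} = Σᵢ Xᵢ T_{ijk}`. -/
def matT (n : ℕ) (T : Fin n → Fin n → Fin n → ℝ) (X : Fin n → ℝ) :
    Matrix (Fin n) (Fin n) ℝ :=
  Matrix.of fun j k => ∑ i, X i * T i j k

/-- Evaluation of the 3-form `T` on three vectors. -/
def evalT (n : ℕ) (T : Fin n → Fin n → Fin n → ℝ) (X Y Z : Fin n → ℝ) : ℝ :=
  ∑ i, ∑ j, ∑ k, X i * Y j * Z k * T i j k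

attribute [instance] LieRing.ofAssociativeRing

/-- The Lie algebra `g*_T ⊆ so(n)` generated by the elements `X ⌟ T`. -/
def gStarT (n : ℕ) (T : Fin n → Fin n → Fin n → ℝ) :
    LieSubalgebra ℝ (Matrix (Fin n) (Fin n) ℝ) :=
  LieSubalgebra.lieSpan ℝ (Matrix (Fin n) (Fin n) ℝ)
    {B | ∃ X : Fin n → ℝ, B = matT n T X}

/-!
Contracting the first slot, `T(X, Y, Z) = Σⱼₖ (X ⌟ T)ⱼₖ Yⱼ Zₖ`, so `T` vanishes as soon as
`X ∈ Ker Φ_T`. If `T` does not reduce to a proper subspace, testing this against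
`W = (Ker Φ_T)ᗮ` gives `Ker Φ_T = 0`; then `Φ_T` embeds `ℝⁿ` linearly into `g*_T`.
-/

open Module

theorem LinearMap.ker_eq_bot_of_forall_orthogonal_vanishing {𝕜 E F : Type*} [RCLike 𝕜]
    [NormedAddCommGroup E] [InnerProductSpace 𝕜 E] [FiniteDimensional 𝕜 E]
    [AddCommGroup F] [Module 𝕜 F] (f : E →ₗ[𝕜] F)
    (h : ∀ W : Submodule 𝕜 E, (∀ x ∈ Wᗮ, f x = 0) → W = ⊤) : LinearMap.ker f = ⊥ := by
  rw [← Submodule.orthogonal_eq_top_iff]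
  exact h _ fun x hx => by rwa [Submodule.orthogonal_orthogonal] at hx

theorem LieSubalgebra.finrank_le_finrank_lieSpan {R L V : Type*} [Field R] [LieRing L]
    [LieAlgebra R L] [FiniteDimensional R L] [AddCommGroup V] [Module R V] {s : Set L}
    (f : V →ₗ[R] L) (hf : Function.Injective f) (hs : ∀ v, f v ∈ s) :
    finrank R V ≤ finrank R (LieSubalgebra.lieSpan R L s) := by
  have hmem (v : V) : f v ∈ (LieSubalgebra.lieSpan R L s).toSubmodule :=
    LieSubalgebra.subset_lieSpan (hs v)
  have : FiniteDimensional R (LieSubalgebra.lieSpan R L s) :=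
    inferInstanceAs (FiniteDimensional R (LieSubalgebra.lieSpan R L s).toSubmodule)
  exact LinearMap.finrank_le_finrank_of_injective (f := f.codRestrict _ hmem)
    fun v w hvw => hf (congrArg Subtype.val hvw)

theorem evalT_eq_sum_matT (n : ℕ) (T : Fin n → Fin n → Fin n → ℝ) (X Y Z : Fin n → ℝ) :
    evalT n T X Y Z = ∑ j, ∑ k, matT n T X j k * (Y j * Z k) := by
  unfold evalT matT
  rw [Finset.sum_comm]
  refine Finset.sum_congr rfl fun j _ => ?_
  rw [Finset.sum_comm]
  refine Finset.sum_congr rfl fun k _ => ?_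
  rw [Matrix.of_apply, Finset.sum_mul]
  exact Finset.sum_congr rfl fun i _ => by ring

theorem evalT_eq_zero_of_matT_eq_zero (n : ℕ) (T : Fin n → Fin n → Fin n → ℝ)
    {X : Fin n → ℝ} (hX : matT n T X = 0) (Y Z : Fin n → ℝ) : evalT n T X Y Z = 0 := by
  simp [evalT_eq_sum_matT, hX]

def phiT (n : ℕ) (T : Fin n → Fin n → Fin n → ℝ) :
    EuclideanSpace ℝ (Fin n) →ₗ[ℝ] Matrix (Fin n) (Fin n) ℝ where
  toFun X := matT n T X
  map_add' X Y := by
    ext j k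
    simp [matT, add_mul, Finset.sum_add_distrib]
  map_smul' c X := by
    ext j k
    simp [matT, Finset.mul_sum, mul_assoc]

theorem threeform_reduces_and_dim_bound_general (n : ℕ)
    (T : Fin n → Fin n → Fin n → ℝ) :
    (∀ X Y Z : EuclideanSpace ℝ (Fin n),
        matT n T X = 0 → evalT n T X Y Z = 0)
    ∧ ((∀ W : Submodule ℝ (EuclideanSpace ℝ (Fin n)),
          (∀ X ∈ Wᗮ, matT n T X = 0) → W = ⊤) →
        n ≤ Module.finrank ℝ ↥(gStarT n T)) := by
  refine ⟨fun X Y Z hX => evalT_eq_zero_of_matT_eq_zero n T hX Y Z, fun hirr => ?_⟩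
  have hinj : Function.Injective (phiT n T) :=
    LinearMap.ker_eq_bot.mp ((phiT n T).ker_eq_bot_of_forall_orthogonal_vanishing hirr)
  have hdim := LieSubalgebra.finrank_le_finrank_lieSpan (phiT n T) hinj
    (s := {B | ∃ X : Fin n → ℝ, B = matT n T X}) fun X => ⟨X, rfl⟩
  rwa [finrank_euclideanSpace_fin] at hdim

/-- For a 3-form `T ∈ Λ³(ℝⁿ)` and `Φ_T(X) = X ⌟ T`, the form `T`
lies in `Λ³` of the orthogonal complement of `Ker Φ_T`, i.e. `T` vanishes as
soon as one of its arguments lies in `Ker Φ_T`.  In particular, if `T` cannot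
be reduced to a proper subspace of `ℝⁿ`, then `n ≤ dim g*_T`. -/
theorem threeform_reduces_and_dim_bound (n : ℕ)
    (T : Fin n → Fin n → Fin n → ℝ)
    (halt : ∀ i j k : Fin n, T i j k = - T j i k ∧ T i j k = - T i k j) :
    (∀ X Y Z : EuclideanSpace ℝ (Fin n),
        matT n T X = 0 → evalT n T X Y Z = 0)
    ∧ ((∀ W : Submodule ℝ (EuclideanSpace ℝ (Fin n)),
          (∀ X ∈ Wᗮ, matT n T X = 0) → W = ⊤) →
        n ≤ Module.finrank ℝ ↥(gStarT n T)) :=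
  threeform_reduces_and_dim_bound_general n T
end

section
/- Let T be a 3-form on ℝⁿ and suppose a subspace V ⊂ ℝⁿ is invariant under all endomorphisms X ⌟ T ∈ so(n), X ∈ ℝⁿ (hence under the Lie algebra g*_T they generate). Then T = T₁ + T₂ with T₁ ∈ Λ³(V) and T₂ ∈ Λ³(V^⊥), i.e. T(X,Y,Z) = 0 whenever one argument is in V and another in V^⊥. -/
open Matrix

section ThreeForm

variable {n : ℕ} {T : Fin n → Fin n → Fin n → ℝ}

theorem evalT_eq_dotProduct_mulVec_matT (X Y Z : Fin n → ℝ) :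
    evalT n T X Y Z = Y ⬝ᵥ (matT n T X *ᵥ Z) := by
  simp only [evalT, matT, dotProduct, mulVec, of_apply, Finset.mul_sum, Finset.sum_mul]
  rw [Finset.sum_comm]
  refine Finset.sum_congr rfl fun j _ => ?_
  rw [Finset.sum_comm]
  refine Finset.sum_congr rfl fun i _ => Finset.sum_congr rfl fun k _ => ?_
  ring

theorem evalT_swap₁₂ (hT : ∀ i j k, T i j k = -T j i k) (X Y Z : Fin n → ℝ) :
    evalT n T Y X Z = -evalT n T X Y Z := by
  simp only [evalT, ← Finset.sum_neg_distrib]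
  rw [Finset.sum_comm]
  refine Finset.sum_congr rfl fun i _ => Finset.sum_congr rfl fun j _ =>
    Finset.sum_congr rfl fun k _ => ?_
  rw [hT j i k]
  ring

theorem evalT_swap₂₃ (hT : ∀ i j k, T i j k = -T i k j) (X Y Z : Fin n → ℝ) :
    evalT n T X Z Y = -evalT n T X Y Z := by
  simp only [evalT, ← Finset.sum_neg_distrib]
  refine Finset.sum_congr rfl fun i _ => ?_
  rw [Finset.sum_comm]
  refine Finset.sum_congr rfl fun j _ => Finset.sum_congr rfl fun k _ => ?_
  rw [hT i k j]
  ring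

theorem evalT_cycle (hT₁₂ : ∀ i j k, T i j k = -T j i k) (hT₂₃ : ∀ i j k, T i j k = -T i k j)
    (X Y Z : Fin n → ℝ) : evalT n T X Y Z = evalT n T Y Z X := by
  rw [evalT_swap₂₃ hT₂₃ Y X Z, evalT_swap₁₂ hT₁₂]

theorem evalT_eq_zero_of_mem_orthogonal_of_mem {V : Submodule ℝ (EuclideanSpace ℝ (Fin n))}
    (hinv : ∀ (X : Fin n → ℝ), ∀ v ∈ V,
        (WithLp.toLp 2 ((matT n T X).mulVec v) : EuclideanSpace ℝ (Fin n)) ∈ V)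
    (X : Fin n → ℝ) {Y Z : EuclideanSpace ℝ (Fin n)} (hY : Y ∈ Vᗮ) (hZ : Z ∈ V) :
    evalT n T X Y Z = 0 := by
  have h := Submodule.inner_right_of_mem_orthogonal (hinv X Z hZ) hY
  rwa [EuclideanSpace.inner_eq_star_dotProduct, star_trivial, WithLp.ofLp_toLp,
    ← evalT_eq_dotProduct_mulVec_matT] at h

end ThreeForm

/-- If a subspace `V ⊆ ℝⁿ` is invariant under all endomorphisms
`X ⌟ T ∈ so(n)` (hence under the Lie algebra `g*_T` they generate), then
`T = T₁ + T₂` with `T₁ ∈ Λ³(V)` and `T₂ ∈ Λ³(V^⊥)`; i.e. `T(X,Y,Z) = 0`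
whenever one argument is in `V` and another one is in `V^⊥`. -/
theorem threeform_splits_of_invariant_subspace (n : ℕ)
    (T : Fin n → Fin n → Fin n → ℝ)
    (halt : ∀ i j k : Fin n, T i j k = - T j i k ∧ T i j k = - T i k j)
    (V : Submodule ℝ (EuclideanSpace ℝ (Fin n)))
    (hinv : ∀ (X : Fin n → ℝ), ∀ v ∈ V,
        (WithLp.toLp 2 ((matT n T X).mulVec v) : EuclideanSpace ℝ (Fin n)) ∈ V) :
    ∀ X Y Z : EuclideanSpace ℝ (Fin n),
      ((X ∈ V ∧ (Y ∈ Vᗮ ∨ Z ∈ Vᗮ)) ∨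
       (Y ∈ V ∧ (X ∈ Vᗮ ∨ Z ∈ Vᗮ)) ∨
       (Z ∈ V ∧ (X ∈ Vᗮ ∨ Y ∈ Vᗮ))) →
      evalT n T X Y Z = 0 := by
  have cycle := evalT_cycle (fun i j k => (halt i j k).1) (fun i j k => (halt i j k).2)
  have vanish := evalT_eq_zero_of_mem_orthogonal_of_mem hinv
  have vanish' (X : Fin n → ℝ) {Y Z : EuclideanSpace ℝ (Fin n)} (hY : Y ∈ V) (hZ : Z ∈ Vᗮ) :
      evalT n T X Y Z = 0 := by
    rw [← neg_eq_zero, ← evalT_swap₂₃ (fun i j k => (halt i j k).2), vanish X hZ hY]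
  intro X Y Z h
  rcases h with ⟨hX, hY | hZ⟩ | ⟨hY, hX | hZ⟩ | ⟨hZ, hX | hY⟩
  · rw [cycle, cycle, vanish' _ hX hY]
  · rw [cycle, vanish _ hZ hX]
  · rw [cycle, cycle, vanish _ hX hY]
  · exact vanish' _ hY hZ
  · rw [cycle, vanish' _ hZ hX]
  · exact vanish _ hY hZ
end

section
/- For any 3-form T on euclidean ℝⁿ, the Lie subalgebra g*_T of so(n) generated by all interior products X ⌟ T is semisimple and coincides with its derived algebra [g*_T, g*_T]. -/
attribute [local instance 100] LieRing.ofAssociativeRing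

/-!
The form `(A, B) ↦ tr (A B)` is invariant on `gl(n)` and negative definite on `so(n) ⊇ g*_T`, so
every abelian ideal of `g*_T` is central and semisimplicity reduces to a trivial center. If `Z` is
central, then reading `[Z, eₖ ⌟ T] = 0` at the entry `(j, k)` and summing over `k` gives, by total
antisymmetry of `T`, `tr (Z (X ⌟ T)) = 0` for every `X`. Matrices commuting with `Z` and
trace-orthogonal to it form a Lie subalgebra, which therefore contains `g*_T`; in particular `Z`
is trace-orthogonal to itself, so `Z = 0`. Finally a semisimple Lie algebra is perfect, since each
simple ideal `I` satisfies `[I, I] = I`.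
-/

open LieAlgebra LieModule Matrix

theorem LieAlgebra.IsSemisimple.derivedSeries_one_eq_top {R L : Type*} [CommRing R] [LieRing L]
    [LieAlgebra R L] [IsSemisimple R L] : derivedSeries R L 1 = ⊤ := by
  rw [derivedSeries_def, derivedSeriesOfIdeal_succ, derivedSeriesOfIdeal_zero, eq_top_iff]
  conv_lhs => rw [← IsSemisimple.sSup_atoms_eq_top]
  refine sSup_le fun I hI => ?_
  rw [← lie_eq_self_of_isAtom_of_nonabelian I hI (IsSemisimple.non_abelian_of_isAtom I hI)]
  exact LieSubmodule.mono_lie le_top le_top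

namespace LieAlgebra.InvariantForm

variable {R L : Type*} [CommRing R] [LieRing L] [LieAlgebra R L]

theorem le_center_of_isLieAbelian (Φ : LinearMap.BilinForm R L) (hΦ_inv : Φ.lieInvariant L)
    (hΦ_aniso : ∀ x, Φ x x = 0 → x = 0) (I : LieIdeal R L) [IsLieAbelian I] :
    I ≤ center R L := by
  intro x hx
  rw [mem_maxTrivSubmodule]
  intro y
  have hxy_mem : ⁅x, y⁆ ∈ I := lie_mem_left R L I x y hx
  have hxxy : ⁅x, ⁅x, y⁆⁆ = 0 :=
    congrArg Subtype.val (trivial_lie_zero I I (⟨x, hx⟩ : I) ⟨_, hxy_mem⟩)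
  have hxy : ⁅x, y⁆ = 0 := hΦ_aniso _ (by rw [hΦ_inv, hxxy, map_zero, neg_zero])
  rw [← lie_skew, hxy, neg_zero]

theorem isSemisimple_of_anisotropic {K : Type*} [Field K] [LieAlgebra K L] [Module.Finite K L]
    (Φ : LinearMap.BilinForm K L) (hΦ_inv : Φ.lieInvariant L) (hΦ_refl : Φ.IsRefl)
    (hΦ_aniso : ∀ x, Φ x x = 0 → x = 0) (hcenter : center K L = ⊥) :
    IsSemisimple K L := by
  refine isSemisimple_of_nondegenerate Φ ?_ hΦ_inv hΦ_refl fun I hI hIab => hI.1 ?_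
  · exact hΦ_refl.nondegenerate_iff_separatingLeft.mpr fun x hx => hΦ_aniso x (hx x)
  · exact eq_bot_iff.mpr (hcenter ▸ le_center_of_isLieAbelian Φ hΦ_inv hΦ_aniso I)

end LieAlgebra.InvariantForm

namespace Matrix

variable {ι R : Type*} [Fintype ι] [DecidableEq ι] [CommRing R]

def traceOrthCentralizer (W : Matrix ι ι R) : LieSubalgebra R (Matrix ι ι R) where
  carrier := {A | Commute W A ∧ (W * A).trace = 0}
  add_mem' hA hB := ⟨hA.1.add_right hB.1, by rw [Matrix.mul_add, trace_add, hA.2, hB.2, add_zero]⟩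
  zero_mem' := ⟨Commute.zero_right W, by simp⟩
  smul_mem' c _ hA := ⟨hA.1.smul_right c, by rw [Matrix.mul_smul, trace_smul, hA.2, smul_zero]⟩
  lie_mem' {A B} hA hB := by
    refine ⟨?_, ?_⟩
    · rw [Ring.lie_def]
      exact (hA.1.mul_right hB.1).sub_right (hB.1.mul_right hA.1)
    · have hcyc : (W * (A * B)).trace = (W * (B * A)).trace := by
        rw [← Matrix.mul_assoc, hA.1.eq, Matrix.mul_assoc, trace_mul_comm, Matrix.mul_assoc]
      rw [Ring.lie_def, Matrix.mul_sub, trace_sub, hcyc, sub_self]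

theorem eq_zero_of_mem_so_of_trace_mul_self_eq_zero {A : Matrix ι ι ℝ}
    (hA : A ∈ Orthogonal.so ι ℝ) (h : (A * A).trace = 0) : A = 0 := by
  rw [Orthogonal.mem_so] at hA
  rw [← trace_conjTranspose_mul_self_eq_zero_iff, conjTranspose_eq_transpose_of_trivial, hA,
    Matrix.neg_mul, trace_neg, h, neg_zero]

end Matrix

theorem LieModule.traceForm_lieSubalgebra_matrix_apply {ι R : Type*} [Fintype ι] [DecidableEq ι]
    [CommRing R] (L : LieSubalgebra R (Matrix ι ι R)) (x y : L) :
    traceForm R L (ι → R) x y = ((x : Matrix ι ι R) * y).trace := by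
  simp [traceForm_apply_apply, LieSubalgebra.toEnd_eq, ← Matrix.toLin'_mul]

theorem LieModule.traceForm_anisotropic_of_le_so {ι : Type*} [Fintype ι] [DecidableEq ι]
    {L : LieSubalgebra ℝ (Matrix ι ι ℝ)} (hL : L ≤ Orthogonal.so ι ℝ) (x : L)
    (hx : traceForm ℝ L (ι → ℝ) x x = 0) : x = 0 := by
  rw [traceForm_lieSubalgebra_matrix_apply] at hx
  exact Subtype.ext (eq_zero_of_mem_so_of_trace_mul_self_eq_zero (hL x.2) hx)

section gStarT

variable {n : ℕ} {T : Fin n → Fin n → Fin n → ℝ}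

theorem matT_single (m : Fin n) : matT n T (Pi.single m 1) = Matrix.of (T m) := by
  ext j k
  simp [matT, Pi.single_apply]

variable (halt : ∀ i j k : Fin n, T i j k = - T j i k ∧ T i j k = - T i k j)
include halt

theorem matT_mem_so (X : Fin n → ℝ) : matT n T X ∈ Orthogonal.so (Fin n) ℝ := by
  rw [Orthogonal.mem_so]
  ext j k
  simp only [matT, transpose_apply, Matrix.neg_apply, of_apply, ← Finset.sum_neg_distrib,
    (halt _ k j).2, mul_neg]

theorem gStarT_le_so : gStarT n T ≤ Orthogonal.so (Fin n) ℝ :=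
  LieSubalgebra.lieSpan_le.mpr <| by
    rintro _ ⟨X, rfl⟩
    exact matT_mem_so halt X

theorem trace_mul_matT_eq_zero_of_commute {Z : Matrix (Fin n) (Fin n) ℝ}
    (hZ : ∀ X, Commute Z (matT n T X)) (X : Fin n → ℝ) : (Z * matT n T X).trace = 0 := by
  have hdiag : ∀ i j, T i j i = 0 := fun i j => by
    linarith [(halt i j i).1, (halt j i i).2, (halt i j i).2, (halt i i j).1]
  have hcol : ∀ j k, ∑ l, T k j l * Z l k = 0 := fun j k => by
    have h := congrFun (congrFun (hZ (Pi.single k 1)).eq j) k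
    simpa only [mul_apply, matT_single, of_apply, hdiag, mul_zero, Finset.sum_const_zero,
      eq_comm] using h
  have hcoef : ∀ i, ∑ a, ∑ b, Z a b * T i b a = 0 := fun i => by
    rw [Finset.sum_comm]
    simp only [(halt i _ _).1, Finset.sum_neg_distrib, mul_comm (Z _ _), neg_mul, hcol,
      neg_zero, Finset.sum_const_zero]
  calc (Z * matT n T X).trace = ∑ i, X i * ∑ a, ∑ b, Z a b * T i b a := by
        simp only [trace, diag, mul_apply, matT, of_apply, Finset.mul_sum]
        conv_rhs => rw [Finset.sum_comm]
        refine Finset.sum_congr rfl fun a _ => ?_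
        rw [Finset.sum_comm]
        exact Finset.sum_congr rfl fun b _ => Finset.sum_congr rfl fun i _ => by ring
    _ = 0 := by simp only [hcoef, mul_zero, Finset.sum_const_zero]

theorem center_gStarT_eq_bot : center ℝ (gStarT n T) = ⊥ := by
  refine (LieSubmodule.eq_bot_iff _).mpr fun z hz => ?_
  rw [mem_maxTrivSubmodule] at hz
  have hcomm : ∀ X, Commute (z : Matrix (Fin n) (Fin n) ℝ) (matT n T X) := fun X => by
    have h := congrArg Subtype.val (hz ⟨matT n T X, LieSubalgebra.subset_lieSpan ⟨X, rfl⟩⟩)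
    rw [LieSubalgebra.coe_bracket, ZeroMemClass.coe_zero, Ring.lie_def, sub_eq_zero] at h
    exact h.symm
  have hle : gStarT n T ≤ traceOrthCentralizer (z : Matrix (Fin n) (Fin n) ℝ) :=
    LieSubalgebra.lieSpan_le.mpr <| by
      rintro _ ⟨X, rfl⟩
      exact ⟨hcomm X, trace_mul_matT_eq_zero_of_commute halt hcomm X⟩
  exact Subtype.ext <|
    eq_zero_of_mem_so_of_trace_mul_self_eq_zero (gStarT_le_so halt z.2) (hle z.2).2

end gStarT

/-- For any 3-form `T ∈ Λ³(ℝⁿ)` the Lie algebra `g*_T` is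
semisimple and coincides with its derived algebra `[g*_T, g*_T]`. -/
theorem gStarT_isSemisimple_and_perfect (n : ℕ)
    (T : Fin n → Fin n → Fin n → ℝ)
    (halt : ∀ i j k : Fin n, T i j k = - T j i k ∧ T i j k = - T i k j) :
    LieAlgebra.IsSemisimple ℝ ↥(gStarT n T)
      ∧ LieAlgebra.derivedSeries ℝ ↥(gStarT n T) 1 = ⊤ := by
  have hss : IsSemisimple ℝ (gStarT n T) :=
    InvariantForm.isSemisimple_of_anisotropic (traceForm ℝ (gStarT n T) (Fin n → ℝ))
      (traceForm_lieInvariant _ _ _) (traceForm_isSymm _ _ _).isRefl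
      (traceForm_anisotropic_of_le_so (gStarT_le_so halt)) (center_gStarT_eq_bot halt)
  exact ⟨hss, hss.derivedSeries_one_eq_top⟩
end

section
/- Let T ∈ Λ³(ℝⁿ) be a constant 3-form such that there exists a nonzero spinor ψ ∈ Δₙ with (X ⌟ T)·ψ = 0 for all X ∈ ℝⁿ (equivalently, g*_T · ψ = 0). Then T = 0. -/
set_option linter.unusedSectionVars false

namespace ThreeformAux

variable {A : Type*} [Ring A] [Algebra ℂ A] {n : ℕ}

def bF (c : Fin n → A) (T : Fin n → Fin n → Fin n → ℝ) (k : Fin n) : A :=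
  ∑ j : Fin n, ∑ l : Fin n, ((T k j l : ℝ) : ℂ) • (c j * c l)

def tauF (c : Fin n → A) (T : Fin n → Fin n → Fin n → ℝ) : A :=
  ∑ i : Fin n, c i * bF c T i

variable (c : Fin n → A) (T : Fin n → Fin n → Fin n → ℝ)
variable (hrel : ∀ i j : Fin n,
    c i * c j + c j * c i = if i = j then (-2 : ℂ) • 1 else 0)
variable (halt : ∀ i j k : Fin n, T i j k = - T j i k ∧ T i j k = - T i k j)

include hrel in
theorem trip (j l m : Fin n) :
    c j * c l * c m = c m * (c j * c l)
      + (if l = m then (-2 : ℂ) • c j else 0)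
      + (if j = m then (2 : ℂ) • c l else 0) := by
  have h1 : c l * c m = (if l = m then (-2 : ℂ) • 1 else 0) - c m * c l :=
    eq_sub_of_add_eq (hrel l m)
  have h2 : c j * c m = (if j = m then (-2 : ℂ) • 1 else 0) - c m * c j :=
    eq_sub_of_add_eq (hrel j m)
  calc c j * c l * c m = c j * (c l * c m) := mul_assoc _ _ _
    _ = c j * ((if l = m then (-2 : ℂ) • 1 else 0) - c m * c l) := by rw [h1]
    _ = (if l = m then (-2 : ℂ) • c j else 0) - (c j * c m) * c l := by
        split_ifs <;> simp [mul_sub, mul_smul_comm, mul_assoc]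
    _ = (if l = m then (-2 : ℂ) • c j else 0)
        - ((if j = m then (-2 : ℂ) • 1 else 0) - c m * c j) * c l := by rw [h2]
    _ = _ := by
        split_ifs <;> simp [sub_mul, smul_mul_assoc, mul_assoc] <;> abel

include hrel in
theorem sym_contract (g : Fin n → Fin n → ℝ) (hg : ∀ i j, g i j = g j i) :
    ∑ j : Fin n, ∑ q : Fin n, ((g j q : ℝ) : ℂ) • (c j * c q)
      = ((-(∑ j : Fin n, g j j) : ℝ) : ℂ) • 1 := by
  have key : (2 : ℂ) • (∑ j : Fin n, ∑ q : Fin n, ((g j q : ℝ) : ℂ) • (c j * c q))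
      = (2 : ℂ) • (((-(∑ j : Fin n, g j j) : ℝ) : ℂ) • 1) := by
    have swap : ∑ j : Fin n, ∑ q : Fin n, ((g j q : ℝ) : ℂ) • (c j * c q)
        = ∑ j : Fin n, ∑ q : Fin n, ((g j q : ℝ) : ℂ) • (c q * c j) := by
      rw [Finset.sum_comm]
      exact Finset.sum_congr rfl fun q _ => Finset.sum_congr rfl fun j _ => by
        rw [hg q j]
    calc (2 : ℂ) • (∑ j : Fin n, ∑ q : Fin n, ((g j q : ℝ) : ℂ) • (c j * c q))
        = ∑ j : Fin n, ∑ q : Fin n, ((g j q : ℝ) : ℂ) • (c j * c q + c q * c j) := by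
          rw [two_smul]; nth_rewrite 2 [swap]
          rw [← Finset.sum_add_distrib]
          exact Finset.sum_congr rfl fun j _ => by
            rw [← Finset.sum_add_distrib]
            exact Finset.sum_congr rfl fun q _ => by rw [← smul_add]
      _ = ∑ j : Fin n, ∑ q : Fin n, ((g j q : ℝ) : ℂ) •
            (if j = q then (-2 : ℂ) • (1 : A) else 0) := by
          exact Finset.sum_congr rfl fun j _ => Finset.sum_congr rfl fun q _ => by
            rw [hrel j q]
      _ = ∑ j : Fin n, ((g j j : ℝ) : ℂ) • ((-2 : ℂ) • (1 : A)) := by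
          refine Finset.sum_congr rfl fun j _ => ?_
          rw [Finset.sum_eq_single j]
          · simp
          · intro q _ hq; simp [Ne.symm hq]
          · simp
      _ = (2 : ℂ) • (((-(∑ j : Fin n, g j j) : ℝ) : ℂ) • 1) := by
          push_cast
          rw [Finset.sum_congr rfl fun j _ => (smul_smul _ _ _),
            ← Finset.sum_smul, smul_smul]
          congr 1
          rw [← Finset.sum_mul]
          ring
  have h2 : (2 : ℂ) ≠ 0 := two_ne_zero
  exact smul_right_injective A h2 key

include hrel halt in
theorem L1 (k m : Fin n) :
    bF c T k * c m = c m * bF c T k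
      + (4 : ℂ) • ∑ l : Fin n, ((T k m l : ℝ) : ℂ) • c l := by
  have expand : bF c T k * c m
      = ∑ j : Fin n, ∑ l : Fin n, ((T k j l : ℝ) : ℂ) • (c j * c l * c m) := by
    rw [bF, Finset.sum_mul]
    exact Finset.sum_congr rfl fun j _ => by
      rw [Finset.sum_mul]
      exact Finset.sum_congr rfl fun l _ => smul_mul_assoc _ _ _
  have step : ∀ j l : Fin n, ((T k j l : ℝ) : ℂ) • (c j * c l * c m)
      = ((T k j l : ℝ) : ℂ) • (c m * (c j * c l))
        + (if l = m then ((T k j l : ℝ) : ℂ) • ((-2 : ℂ) • c j) else 0)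
        + (if j = m then ((T k j l : ℝ) : ℂ) • ((2 : ℂ) • c l) else 0) := by
    intro j l
    rw [trip c hrel j l m, smul_add, smul_add]
    congr 1
    · congr 1
      split_ifs <;> simp
    · split_ifs <;> simp
  have hS1 : ∑ j : Fin n, ∑ l : Fin n, ((T k j l : ℝ) : ℂ) • (c m * (c j * c l))
      = c m * bF c T k := by
    rw [bF, Finset.mul_sum]
    exact Finset.sum_congr rfl fun j _ => by
      rw [Finset.mul_sum]
      exact Finset.sum_congr rfl fun l _ => (mul_smul_comm _ _ _).symm
  have hS2 : (∑ j : Fin n, ∑ l : Fin n,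
      if l = m then ((T k j l : ℝ) : ℂ) • ((-2 : ℂ) • c j) else 0)
      = (2 : ℂ) • ∑ l : Fin n, ((T k m l : ℝ) : ℂ) • c l := by
    rw [Finset.smul_sum]
    refine Finset.sum_congr rfl fun j _ => ?_
    rw [Finset.sum_ite_eq' Finset.univ m
      (fun l => ((T k j l : ℝ) : ℂ) • ((-2 : ℂ) • c j))]
    simp only [Finset.mem_univ, if_true]
    have h : T k j m = - T k m j := (halt k j m).2
    rw [h, smul_smul, smul_smul]
    congr 1
    push_cast
    ring
  have hS3 : (∑ j : Fin n, ∑ l : Fin n,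
      if j = m then ((T k j l : ℝ) : ℂ) • ((2 : ℂ) • c l) else 0)
      = (2 : ℂ) • ∑ l : Fin n, ((T k m l : ℝ) : ℂ) • c l := by
    rw [Finset.smul_sum]
    rw [show (∑ j : Fin n, ∑ l : Fin n,
        if j = m then ((T k j l : ℝ) : ℂ) • ((2 : ℂ) • c l) else 0)
      = ∑ j : Fin n, (if j = m then
          ∑ l : Fin n, ((T k j l : ℝ) : ℂ) • ((2 : ℂ) • c l) else 0) from
      Finset.sum_congr rfl fun j _ => by split_ifs <;> simp]
    rw [Finset.sum_ite_eq' Finset.univ m]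
    simp only [Finset.mem_univ, if_true]
    refine Finset.sum_congr rfl fun l _ => ?_
    rw [smul_smul, smul_smul]
    congr 1
    ring
  rw [expand]
  simp only [step]
  simp only [Finset.sum_add_distrib]
  rw [hS1, hS2, hS3, add_assoc, ← add_smul]
  norm_num

include hrel halt in
theorem L2 (m : Fin n) :
    tauF c T * c m = (-6 : ℂ) • bF c T m - c m * tauF c T := by
  have key : tauF c T * c m + c m * tauF c T = (-6 : ℂ) • bF c T m := by
    have e1 : tauF c T * c m
        = ∑ i : Fin n, (c i * c m) * bF c T i
          + (4 : ℂ) • ∑ i : Fin n, ∑ l : Fin n, ((T i m l : ℝ) : ℂ) • (c i * c l) := by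
      rw [tauF, Finset.sum_mul, Finset.smul_sum, ← Finset.sum_add_distrib]
      refine Finset.sum_congr rfl fun i _ => ?_
      rw [mul_assoc, L1 c T hrel halt i m, mul_add, ← mul_assoc]
      congr 1
      rw [mul_smul_comm, Finset.mul_sum]
      congr 1
      exact Finset.sum_congr rfl fun l _ => mul_smul_comm _ _ _
    have e2 : c m * tauF c T = ∑ i : Fin n, (c m * c i) * bF c T i := by
      rw [tauF, Finset.mul_sum]
      exact Finset.sum_congr rfl fun i _ => (mul_assoc _ _ _).symm
    rw [e1, e2]
    have e3 : ∑ i : Fin n, (c i * c m) * bF c T i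
        + (4 : ℂ) • (∑ i : Fin n, ∑ l : Fin n, ((T i m l : ℝ) : ℂ) • (c i * c l))
        + ∑ i : Fin n, (c m * c i) * bF c T i
        = ∑ i : Fin n, ((c i * c m + c m * c i) * bF c T i)
          + (4 : ℂ) • (∑ i : Fin n, ∑ l : Fin n, ((T i m l : ℝ) : ℂ) • (c i * c l)) := by
      rw [Finset.sum_congr rfl fun i (_ : i ∈ Finset.univ) => add_mul (c i * c m) (c m * c i) (bF c T i),
        Finset.sum_add_distrib]
      abel
    rw [e3]
    have e4 : ∑ i : Fin n, ((c i * c m + c m * c i) * bF c T i)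
        = (-2 : ℂ) • bF c T m := by
      rw [Finset.sum_congr rfl fun i (_ : i ∈ Finset.univ) => by rw [hrel i m]]
      rw [Finset.sum_congr rfl fun i (_ : i ∈ Finset.univ) =>
        show (if i = m then (-2 : ℂ) • (1 : A) else 0) * bF c T i
          = (if i = m then (-2 : ℂ) • bF c T i else 0) from by
          split_ifs <;> simp [smul_mul_assoc]]
      rw [Finset.sum_ite_eq' Finset.univ m]
      simp
    have e5 : ∑ i : Fin n, ∑ l : Fin n, ((T i m l : ℝ) : ℂ) • (c i * c l)
        = - bF c T m := by
      rw [bF, ← Finset.sum_neg_distrib]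
      refine Finset.sum_congr rfl fun i _ => ?_
      rw [← Finset.sum_neg_distrib]
      refine Finset.sum_congr rfl fun l _ => ?_
      rw [show T i m l = - T m i l from (halt i m l).1]
      push_cast
      rw [neg_smul]
    rw [e4, e5, smul_neg, ← sub_eq_add_neg, ← sub_smul]
    norm_num
  rw [eq_sub_of_add_eq key]

include halt in
theorem Tcyc (a b d : Fin n) : T a b d = T d a b := by
  have h1 := (halt a b d).2
  have h2 := (halt a d b).1
  linarith

theorem sum3_comm (f : Fin n → Fin n → Fin n → A) :
    ∑ m : Fin n, ∑ j : Fin n, ∑ l : Fin n, f m j l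
      = ∑ l : Fin n, ∑ m : Fin n, ∑ j : Fin n, f m j l := by
  calc ∑ m : Fin n, ∑ j : Fin n, ∑ l : Fin n, f m j l
      = ∑ m : Fin n, ∑ l : Fin n, ∑ j : Fin n, f m j l :=
        Finset.sum_congr rfl fun m _ => Finset.sum_comm
    _ = ∑ l : Fin n, ∑ m : Fin n, ∑ j : Fin n, f m j l := Finset.sum_comm

include hrel halt in
theorem L3 (m : Fin n) :
    tauF c T * bF c T m = bF c T m * tauF c T
      + (-6 : ℂ) • ∑ j : Fin n, ∑ l : Fin n,
          ((T m j l : ℝ) : ℂ) • (bF c T j * c l - c j * bF c T l) := by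
  have key : ∀ j l : Fin n, tauF c T * (c j * c l)
      = (c j * c l) * tauF c T + (-6 : ℂ) • (bF c T j * c l - c j * bF c T l) := by
    intro j l
    have h1 : tauF c T * (c j * c l) = (tauF c T * c j) * c l := by rw [mul_assoc]
    rw [h1, L2 c T hrel halt j, sub_mul, smul_mul_assoc, mul_assoc,
      L2 c T hrel halt l, mul_sub, mul_smul_comm, ← mul_assoc]
    rw [smul_sub]
    abel
  calc tauF c T * bF c T m
      = ∑ j : Fin n, ∑ l : Fin n, ((T m j l : ℝ) : ℂ) • (tauF c T * (c j * c l)) := by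
        rw [bF, Finset.mul_sum]
        exact Finset.sum_congr rfl fun j _ => by
          rw [Finset.mul_sum]
          exact Finset.sum_congr rfl fun l _ => mul_smul_comm _ _ _
    _ = ∑ j : Fin n, ∑ l : Fin n, (((T m j l : ℝ) : ℂ) • ((c j * c l) * tauF c T)
          + ((T m j l : ℝ) : ℂ) • ((-6 : ℂ) • (bF c T j * c l - c j * bF c T l))) := by
        exact Finset.sum_congr rfl fun j _ => Finset.sum_congr rfl fun l _ => by
          rw [key j l, smul_add]
    _ = _ := by
        simp only [Finset.sum_add_distrib]
        congr 1
        · rw [bF, Finset.sum_mul]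
          exact Finset.sum_congr rfl fun j _ => by
            rw [Finset.sum_mul]
            exact Finset.sum_congr rfl fun l _ => (smul_mul_assoc _ _ _).symm
        · rw [Finset.smul_sum]
          refine Finset.sum_congr rfl fun j _ => ?_
          rw [Finset.smul_sum]
          exact Finset.sum_congr rfl fun l _ => smul_comm _ _ _

include halt in
theorem CQ :
    ∑ m : Fin n, ∑ j : Fin n, ∑ l : Fin n,
        ((T m j l : ℝ) : ℂ) • (c m * (c j * bF c T l))
      = ∑ l : Fin n, bF c T l * bF c T l := by
  rw [sum3_comm]
  refine Finset.sum_congr rfl fun l _ => ?_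
  have : ∀ m j : Fin n, ((T m j l : ℝ) : ℂ) • (c m * (c j * bF c T l))
      = (((T l m j : ℝ) : ℂ) • (c m * c j)) * bF c T l := by
    intro m j
    rw [Tcyc T halt m j l, smul_mul_assoc, mul_assoc]
  simp only [this]
  have e : ∑ x : Fin n, ∑ y : Fin n, (((T l x y : ℝ) : ℂ) • (c x * c y)) * bF c T l
      = (∑ x : Fin n, ∑ y : Fin n, ((T l x y : ℝ) : ℂ) • (c x * c y)) * bF c T l := by
    rw [Finset.sum_mul]
    exact Finset.sum_congr rfl fun x _ => (Finset.sum_mul _ _ _).symm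
  rw [e]
  rfl

include hrel halt in
theorem CP :
    ∑ m : Fin n, ∑ j : Fin n, ∑ l : Fin n,
        ((T m j l : ℝ) : ℂ) • (c m * (bF c T j * c l))
      = -(∑ j : Fin n, bF c T j * bF c T j)
        + (4 : ℂ) • (((-(∑ m : Fin n, ∑ j : Fin n, ∑ l : Fin n, (T m j l)^2)) : ℝ) : ℂ)
          • (1 : A) := by
  have step : ∀ m j l : Fin n, ((T m j l : ℝ) : ℂ) • (c m * (bF c T j * c l))
      = ((T m j l : ℝ) : ℂ) • ((c m * c l) * bF c T j)
        + (4 : ℂ) • ∑ p : Fin n, ((T m j l * T j l p : ℝ) : ℂ) • (c m * c p) := by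
    intro m j l
    rw [L1 c T hrel halt j l, mul_add, ← mul_assoc, smul_add]
    congr 1
    rw [mul_smul_comm, Finset.mul_sum, smul_comm ((T m j l : ℝ) : ℂ) (4 : ℂ),
      Finset.smul_sum]
    congr 1
    refine Finset.sum_congr rfl fun p _ => ?_
    rw [mul_smul_comm, smul_smul]
    push_cast
    ring_nf
  simp only [step, Finset.sum_add_distrib]
  congr 1
  · -- P1
    rw [Finset.sum_comm]
    rw [← Finset.sum_neg_distrib]
    refine Finset.sum_congr rfl fun j _ => ?_
    have inner : ∑ m : Fin n, ∑ l : Fin n,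
        ((T m j l : ℝ) : ℂ) • ((c m * c l) * bF c T j)
        = (∑ m : Fin n, ∑ l : Fin n, ((T m j l : ℝ) : ℂ) • (c m * c l)) * bF c T j := by
      rw [Finset.sum_mul]
      refine Finset.sum_congr rfl fun m _ => ?_
      rw [Finset.sum_mul]
      exact Finset.sum_congr rfl fun l _ => (smul_mul_assoc _ _ _).symm
    rw [inner]
    have neg : ∑ m : Fin n, ∑ l : Fin n, ((T m j l : ℝ) : ℂ) • (c m * c l)
        = - bF c T j := by
      rw [bF, ← Finset.sum_neg_distrib]
      refine Finset.sum_congr rfl fun m _ => ?_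
      rw [← Finset.sum_neg_distrib]
      refine Finset.sum_congr rfl fun l _ => ?_
      rw [show T m j l = - T j m l from (halt m j l).1]
      push_cast
      rw [neg_smul]
    rw [neg, neg_mul]
  · -- P2
    have pull : ∑ m : Fin n, ∑ j : Fin n, ∑ l : Fin n,
        ((4 : ℂ) • ∑ p : Fin n, ((T m j l * T j l p : ℝ) : ℂ) • (c m * c p))
        = (4 : ℂ) • ∑ m : Fin n, ∑ j : Fin n, ∑ l : Fin n,
            ∑ p : Fin n, ((T m j l * T j l p : ℝ) : ℂ) • (c m * c p) := by
      rw [Finset.smul_sum]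
      refine Finset.sum_congr rfl fun m _ => ?_
      rw [Finset.smul_sum]
      refine Finset.sum_congr rfl fun j _ => ?_
      rw [Finset.smul_sum]
    rw [pull]
    congr 1
    have reorder : ∀ m : Fin n, ∑ j : Fin n, ∑ l : Fin n, ∑ p : Fin n,
        ((T m j l * T j l p : ℝ) : ℂ) • (c m * c p)
        = ∑ p : Fin n, ((∑ j : Fin n, ∑ l : Fin n, T m j l * T j l p : ℝ) : ℂ)
            • (c m * c p) := by
      intro m
      rw [sum3_comm (fun j l p => ((T m j l * T j l p : ℝ) : ℂ) • (c m * c p))]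
      refine Finset.sum_congr rfl fun p _ => ?_
      push_cast
      rw [Finset.sum_smul]
      refine Finset.sum_congr rfl fun j _ => ?_
      rw [Finset.sum_smul]
    rw [Finset.sum_congr rfl fun m (_ : m ∈ Finset.univ) => reorder m]
    rw [sym_contract c hrel
      (fun m p => ∑ j : Fin n, ∑ l : Fin n, T m j l * T j l p) ?hg]
    case hg =>
      intro m p
      refine Finset.sum_congr rfl fun j _ => Finset.sum_congr rfl fun l _ => ?_
      rw [Tcyc T halt j l m, Tcyc T halt j l p]
      ring
    have diag : ∀ m j l : Fin n, T m j l * T j l m = (T m j l)^2 := fun m j l => by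
      rw [Tcyc T halt j l m]; ring
    simp only [diag]

include hrel halt in
theorem main_identity :
    tauF c T * tauF c T
      + (9 : ℂ) • ∑ m : Fin n, bF c T m * bF c T m
      + ((((12 : ℝ) * ∑ m : Fin n, ∑ j : Fin n, ∑ l : Fin n, (T m j l)^2 : ℝ)) : ℂ)
        • (1 : A) = 0 := by
  set X := tauF c T * tauF c T with hXdef
  set Y := ∑ m : Fin n, bF c T m * bF c T m with hYdef
  set S := ∑ m : Fin n, ∑ j : Fin n, ∑ l : Fin n, (T m j l)^2 with hSdef
  set Z := ∑ m : Fin n, (c m * tauF c T) * bF c T m with hZdef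
  have hC2 : X = (-6 : ℂ) • Y - Z := by
    rw [hXdef]
    calc tauF c T * tauF c T
        = ∑ m : Fin n, (tauF c T * c m) * bF c T m := by
          nth_rewrite 2 [tauF]
          rw [Finset.mul_sum]
          exact Finset.sum_congr rfl fun m _ => by rw [← mul_assoc]
      _ = ∑ m : Fin n, ((-6 : ℂ) • (bF c T m * bF c T m) - (c m * tauF c T) * bF c T m) := by
          refine Finset.sum_congr rfl fun m _ => ?_
          rw [L2 c T hrel halt m, sub_mul, smul_mul_assoc]
      _ = (-6 : ℂ) • Y - Z := by
          rw [Finset.sum_sub_distrib, hYdef, hZdef, Finset.smul_sum]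
  have hZ : Z = X + (12 : ℂ) • Y + (((24 : ℝ) * S : ℝ) : ℂ) • 1 := by
    have e1 : Z = ∑ m : Fin n, c m * (bF c T m * tauF c T)
        + (-6 : ℂ) • (∑ m : Fin n, ∑ j : Fin n, ∑ l : Fin n,
            ((T m j l : ℝ) : ℂ) • (c m * (bF c T j * c l))
          - ∑ m : Fin n, ∑ j : Fin n, ∑ l : Fin n,
            ((T m j l : ℝ) : ℂ) • (c m * (c j * bF c T l))) := by
      rw [hZdef]
      calc ∑ m : Fin n, (c m * tauF c T) * bF c T m
          = ∑ m : Fin n, (c m * (bF c T m * tauF c T)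
              + (-6 : ℂ) • ∑ j : Fin n, ∑ l : Fin n, ((T m j l : ℝ) : ℂ)
                  • (c m * (bF c T j * c l) - c m * (c j * bF c T l))) := by
            refine Finset.sum_congr rfl fun m _ => ?_
            rw [mul_assoc, L3 c T hrel halt m, mul_add, mul_smul_comm]
            congr 2
            rw [Finset.mul_sum]
            refine Finset.sum_congr rfl fun j _ => ?_
            rw [Finset.mul_sum]
            refine Finset.sum_congr rfl fun l _ => ?_
            rw [mul_smul_comm, mul_sub]
        _ = _ := by
            rw [Finset.sum_add_distrib]
            congr 1
            rw [← Finset.smul_sum]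
            congr 1
            rw [← Finset.sum_sub_distrib]
            refine Finset.sum_congr rfl fun m _ => ?_
            rw [← Finset.sum_sub_distrib]
            refine Finset.sum_congr rfl fun j _ => ?_
            rw [← Finset.sum_sub_distrib]
            refine Finset.sum_congr rfl fun l _ => ?_
            rw [smul_sub]
    rw [e1, CP c T hrel halt, CQ c T halt]
    have e2 : ∑ m : Fin n, c m * (bF c T m * tauF c T) = X := by
      rw [hXdef]
      conv_rhs => rw [tauF, Finset.sum_mul]
      exact Finset.sum_congr rfl fun m _ => by rw [← mul_assoc, tauF]
    rw [e2, ← hYdef, ← hSdef]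
    push_cast
    module
  have hX : X = (-6 : ℂ) • Y - (X + (12 : ℂ) • Y + (((24 : ℝ) * S : ℝ) : ℂ) • 1) :=
    hC2.trans (by rw [hZ])
  have e : (2 : ℂ) • (X + (9 : ℂ) • Y + ((((12 : ℝ) * S : ℝ)) : ℂ) • (1 : A))
      = X - ((-6 : ℂ) • Y - (X + (12 : ℂ) • Y + (((24 : ℝ) * S : ℝ) : ℂ) • 1)) := by
    push_cast
    module
  have : (2 : ℂ) • (X + (9 : ℂ) • Y + ((((12 : ℝ) * S : ℝ)) : ℂ) • (1 : A)) = 0 := by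
    rw [e, ← hX, sub_self]
  have h2 : (2 : ℂ) ≠ 0 := two_ne_zero
  have := smul_right_injective A h2 (by rw [this, smul_zero] :
    (2 : ℂ) • (X + (9 : ℂ) • Y + ((((12 : ℝ) * S : ℝ)) : ℂ) • (1 : A)) = (2 : ℂ) • (0 : A))
  exact this

theorem final
    (n : ℕ) (Δ : Type*) [AddCommGroup Δ] [Module ℂ Δ]
    (c : Fin n → Module.End ℂ Δ)
    (hrel : ∀ i j : Fin n,
        c i * c j + c j * c i = if i = j then (-2 : ℂ) • 1 else 0)
    (T : Fin n → Fin n → Fin n → ℝ)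
    (halt : ∀ i j k : Fin n, T i j k = - T j i k ∧ T i j k = - T i k j)
    (ψ : Δ) (hψ : ψ ≠ 0)
    (hann : ∀ X : Fin n → ℝ,
        ((1 / 2 : ℂ) • ∑ j : Fin n, ∑ l : Fin n,
            (((∑ i : Fin n, X i * T i j l : ℝ)) : ℂ) • (c j * c l)) ψ = 0) :
    ∀ i j k : Fin n, T i j k = 0 := by
  have hb0 : ∀ k : Fin n, bF c T k ψ = 0 := by
    intro k
    have h := hann (fun i => if i = k then 1 else 0)
    have hcoef : ∀ j l : Fin n,
        (∑ i : Fin n, (if i = k then (1:ℝ) else 0) * T i j l) = T k j l := by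
      intro j l
      rw [Finset.sum_congr rfl fun i (_ : i ∈ Finset.univ) =>
        show (if i = k then (1:ℝ) else 0) * T i j l
          = if i = k then T i j l else 0 from by split_ifs <;> simp]
      rw [Finset.sum_ite_eq' Finset.univ k]
      simp
    simp only [hcoef] at h
    have h2 : ((1 / 2 : ℂ) • bF c T k) ψ = 0 := h
    rw [LinearMap.smul_apply] at h2
    rcases smul_eq_zero.mp h2 with h3 | h3
    · norm_num at h3
    · exact h3
  have htau0 : tauF c T ψ = 0 := by
    rw [tauF]
    rw [LinearMap.coe_sum, Finset.sum_apply]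
    refine Finset.sum_eq_zero fun i _ => ?_
    rw [Module.End.mul_apply, hb0 i, map_zero]
  have hid := main_identity c T hrel halt
  have happ := congrArg (fun f : Module.End ℂ Δ => f ψ) hid
  simp only [LinearMap.add_apply, LinearMap.smul_apply, LinearMap.zero_apply,
    Module.End.mul_apply, Module.End.one_apply] at happ
  rw [htau0, map_zero] at happ
  have hY : (∑ m : Fin n, bF c T m * bF c T m) ψ = 0 := by
    rw [LinearMap.coe_sum, Finset.sum_apply]
    refine Finset.sum_eq_zero fun m _ => ?_
    rw [Module.End.mul_apply, hb0 m, map_zero]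
  rw [hY] at happ
  simp only [smul_zero, zero_add] at happ
  have hS0 : ((12 : ℝ) * ∑ m : Fin n, ∑ j : Fin n, ∑ l : Fin n, (T m j l)^2) = 0 := by
    rcases smul_eq_zero.mp happ with h | h
    · exact_mod_cast h
    · exact absurd h hψ
  have hS : (∑ m : Fin n, ∑ j : Fin n, ∑ l : Fin n, (T m j l)^2) = 0 := by linarith
  intro i j k
  have h1 := (Finset.sum_eq_zero_iff_of_nonneg (fun m _ =>
    Finset.sum_nonneg fun j _ => Finset.sum_nonneg fun l _ => sq_nonneg _)).mp hS
    i (Finset.mem_univ i)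
  have h2 := (Finset.sum_eq_zero_iff_of_nonneg (fun j _ =>
    Finset.sum_nonneg fun l _ => sq_nonneg _)).mp h1 j (Finset.mem_univ j)
  have h3 := (Finset.sum_eq_zero_iff_of_nonneg (fun l _ => sq_nonneg _)).mp h2
    k (Finset.mem_univ k)
  exact pow_eq_zero_iff two_ne_zero |>.mp h3

end ThreeformAux

/-- Let `T ∈ Λ³(ℝⁿ)` be a constant 3-form and suppose there is a
nonzero spinor `ψ ∈ Δₙ` with `(X ⌟ T)·ψ = 0` for all `X ∈ ℝⁿ` (equivalently,
`g*_T · ψ = 0`).  Then `T = 0`.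
The spinor module is modelled as a complex module `Δ` with endomorphisms `c i`
satisfying the Clifford relations; the 2-form `X ⌟ T` acts by Clifford
multiplication as `(1/2) Σ_{j,l} (Σᵢ Xᵢ T_{ijl}) c_j c_l`. -/
theorem threeform_zero_of_spinor_annihilated
    (n : ℕ) (Δ : Type*) [AddCommGroup Δ] [Module ℂ Δ]
    (c : Fin n → Module.End ℂ Δ)
    (hrel : ∀ i j : Fin n,
        c i * c j + c j * c i = if i = j then (-2 : ℂ) • 1 else 0)
    (T : Fin n → Fin n → Fin n → ℝ)
    (halt : ∀ i j k : Fin n, T i j k = - T j i k ∧ T i j k = - T i k j)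
    (ψ : Δ) (hψ : ψ ≠ 0)
    (hann : ∀ X : Fin n → ℝ,
        ((1 / 2 : ℂ) • ∑ j : Fin n, ∑ l : Fin n,
            (((∑ i : Fin n, X i * T i j l : ℝ)) : ℂ) • (c j * c l)) ψ = 0) :
    ∀ i j k : Fin n, T i j k = 0 :=
  ThreeformAux.final n Δ c hrel T halt ψ hψ hann
end

section
/- Let ∇ be a metric connection with totally skew-symmetric torsion T on a Riemannian manifold (M,g), so ∇_X Y = ∇^g_X Y + (1/2)T(X,Y,−). Then for any exterior form ω, the ∇-codifferential δ^∇ω = −Σᵢ eᵢ ⌟ ∇_{eᵢ}ω and the Riemannian codifferential δ^g ω are related by δ^∇ω = δ^g ω − (1/2) Σ_{i,j} (eᵢ ⌟ eⱼ ⌟ T) ∧ (eᵢ ⌟ eⱼ ⌟ ω), where (eᵢ) is a local orthonormal frame. In particular δ^∇T = δ^g T. -/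
/-!  Pointwise model for exterior forms on a Riemannian manifold `(M,g,T)`:
a `q`-form is given by its (alternating) coefficient array
`ω : (Fin q → Fin n) → ℝ` with respect to a local orthonormal frame `(eᵢ)`,
and the Riemannian covariant derivatives `∇^g_{eᵢ} ω` at the point are
arbitrary arrays `Dg i`.  The metric connection with skew-symmetric torsion `T`
is `∇_X Y = ∇^g_X Y + (1/2) T(X,Y,−)`, so that
`(∇_{eᵢ}ω)(Y₁,…) = (∇^g_{eᵢ}ω)(Y₁,…) − Σ_l ω(Y₁,…,(1/2)T(eᵢ,Y_l,·),…)`.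
The codifferential of a connection `∇'` is `δ^{∇'}ω = −Σᵢ eᵢ ⌟ ∇'_{eᵢ}ω`. -/

/-- `Fin.cons`, specialised to index tuples. -/
def consV {n p : ℕ} (i : Fin n) (v : Fin (p + 1) → Fin n) : Fin (p + 2) → Fin n :=
  Fin.cons i v

/-- Wedge product of a 1-form `α` with an `r`-form `β` (as alternating arrays):
`(α ∧ β)(Y₀,…,Y_r) = Σ_l (−1)^l α(Y_l) β(Y₀,…,Ŷ_l,…,Y_r)`. -/
def wedge1 {n r : ℕ} (α : Fin n → ℝ) (β : (Fin r → Fin n) → ℝ) :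
    (Fin (r + 1) → Fin n) → ℝ :=
  fun v => ∑ l : Fin (r + 1), (-1 : ℝ) ^ (l : ℕ) * α (v l) * β (v ∘ l.succAbove)

/-! In `δ^∇ω = -Σᵢ eᵢ ⌟ ∇_{eᵢ}ω` the torsion acts as the derivation `-(1/2) Σ_l T(eᵢ, Y_l, ·)`
on the slots of `ω`. After contraction with `eᵢ`, the term acting on the slot of `eᵢ` itself
vanishes because `T(eᵢ, eᵢ, ·) = 0`; in each of the others, moving the modified slot to the front
and using `T(eᵢ, Y, eⱼ) = T(eⱼ, eᵢ, Y)` yields a summand of `(eᵢ ⌟ eⱼ ⌟ T) ∧ (eᵢ ⌟ eⱼ ⌟ ω)`.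
For `ω = T` the correction is a sum of squares `α ∧ α = 0` of the 1-forms `α = eᵢ ⌟ eⱼ ⌟ T`. -/

section Alternating

variable {R α : Type*} [CommRing R] {q : ℕ}

def IsAlternatingArray (ω : (Fin q → α) → R) : Prop :=
  ∀ (v : Fin q → α) (σ : Equiv.Perm (Fin q)), ω (v ∘ σ) = ((Equiv.Perm.sign σ : ℤ) : R) * ω v

theorem IsAlternatingArray.insertNth {ω : (Fin (q + 1) → α) → R}
    (hω : IsAlternatingArray ω) (l : Fin (q + 1)) (a : α) (x : Fin q → α) :
    ω (l.insertNth a x) = (-1) ^ (l : ℕ) * ω (Fin.cons a x) := by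
  rw [← Fin.cons_comp_cycleRange, hω, Fin.sign_cycleRange]
  push_cast
  rfl

theorem IsAlternatingArray.cons_update {ω : (Fin (q + 2) → α) → R}
    (hω : IsAlternatingArray ω) (v : Fin (q + 1) → α) (i m : α) (l : Fin (q + 1)) :
    ω (Fin.cons i (Function.update v l m)) =
      -(-1) ^ (l : ℕ) * ω (Fin.cons m (Fin.cons i (l.removeNth v))) := by
  have hins : l.succ.insertNth m (Fin.cons i (l.removeNth v)) =
      (Fin.cons i (Function.update v l m) : Fin (q + 2) → α) := by
    refine Fin.insertNth_eq_iff.2 ⟨by simp, ?_⟩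
    rw [← Fin.removeNth_update l m v]
    exact (Fin.cons_comp_succ_succAbove i _ l).symm
  rw [← hins, hω.insertNth, Fin.val_succ, pow_succ]
  ring

end Alternating

theorem wedge1_self_eq_zero {n : ℕ} (a : Fin n → ℝ) (v : Fin 2 → Fin n) :
    wedge1 a (fun w : Fin 1 → Fin n => a (w 0)) v = 0 := by
  rw [wedge1, Fin.sum_univ_two]
  show (-1) ^ ((0 : Fin 2) : ℕ) * a (v 0) * a (v 1)
      + (-1) ^ ((1 : Fin 2) : ℕ) * a (v 1) * a (v 0) = 0
  rw [Fin.val_zero, Fin.val_one]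
  ring

theorem sum_torsion_mul_update_consV {n p : ℕ} {T : Fin n → Fin n → Fin n → ℝ}
    (hT_diag : ∀ i m, T i i m = 0) (hT_cycle : ∀ i j k, T j i k = T i k j)
    {ω : (Fin (p + 2) → Fin n) → ℝ} (hω : IsAlternatingArray ω)
    (v : Fin (p + 1) → Fin n) (i : Fin n) :
    ∑ l : Fin (p + 2), ∑ m : Fin n, T i (consV i v l) m * ω (Function.update (consV i v) l m) =
      -∑ j : Fin n, wedge1 (fun k => T j i k)
        (fun w : Fin p → Fin n => ω (Fin.cons j (Fin.cons i w))) v := by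
  have h_slot_zero : ∑ m : Fin n, T i (consV i v 0) m * ω (Function.update (consV i v) 0 m) = 0 :=
    Finset.sum_eq_zero fun m _ => by simp [consV, hT_diag]
  rw [Fin.sum_univ_succ, h_slot_zero, zero_add]
  simp only [consV, Fin.cons_succ, ← Fin.cons_update, hω.cons_update, wedge1, hT_cycle]
  rw [Finset.sum_comm, ← Finset.sum_neg_distrib]
  refine Finset.sum_congr rfl fun j _ => ?_
  rw [← Finset.sum_neg_distrib]
  refine Finset.sum_congr rfl fun l _ => ?_
  rw [show l.removeNth v = v ∘ l.succAbove from rfl]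
  ring

/-- For a metric connection `∇` with totally skew-symmetric
torsion `T` (so `∇ = ∇^g + (1/2)T(·,·,−)`), the codifferentials satisfy
`δ^∇ω = δ^g ω − (1/2) Σ_{i,j} (eᵢ ⌟ eⱼ ⌟ T) ∧ (eᵢ ⌟ eⱼ ⌟ ω)` for every
exterior form `ω`; in particular `δ^∇ T = δ^g T` for the torsion form itself
(the correction term vanishes for `ω = T`). -/
theorem codifferential_formula_skew_torsion (n p : ℕ)
    (T : Fin n → Fin n → Fin n → ℝ)
    (haltT : ∀ i j k : Fin n, T i j k = - T j i k ∧ T i j k = - T i k j)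
    (ω : (Fin (p + 2) → Fin n) → ℝ)
    (haltω : ∀ (v : Fin (p + 2) → Fin n) (σ : Equiv.Perm (Fin (p + 2))),
        ω (v ∘ σ) = ((Equiv.Perm.sign σ : ℤ) : ℝ) * ω v)
    (Dg : Fin n → ((Fin (p + 2) → Fin n) → ℝ)) :   -- the values ∇^g_{eᵢ} ω
    -- δ^∇ω = δ^gω − (1/2) Σ_{i,j} (eᵢ⌟eⱼ⌟T) ∧ (eᵢ⌟eⱼ⌟ω) :
    (∀ v : Fin (p + 1) → Fin n,
      -(∑ i : Fin n,
          (Dg i (consV i v)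
            - ∑ l : Fin (p + 2), ∑ m : Fin n,
                (1 / 2 : ℝ) * T i ((consV i v) l) m
                  * ω (Function.update (consV i v) l m)))
        = -(∑ i : Fin n, Dg i (consV i v))
          - (1 / 2 : ℝ) * ∑ i : Fin n, ∑ j : Fin n,
              wedge1 (fun k => T j i k)
                (fun w : Fin p → Fin n => ω (Fin.cons j (Fin.cons i w))) v)
    -- in particular, for the torsion form itself the correction term vanishes,
    -- i.e. δ^∇ T = δ^g T :
    ∧ (∀ v : Fin 2 → Fin n,
        ∑ i : Fin n, ∑ j : Fin n,
          wedge1 (fun k => T j i k)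
            (fun w : Fin 1 → Fin n => T j i (w 0)) v = 0) := by
  have hT_diag : ∀ i m, T i i m = 0 := fun i m => by linarith [(haltT i i m).1]
  have hT_cycle : ∀ i j k, T j i k = T i k j := fun i j k => by
    linarith [(haltT j i k).1, (haltT i j k).2]
  refine ⟨fun v => ?_, fun v => ?_⟩
  · simp only [mul_assoc, ← Finset.mul_sum,
      sum_torsion_mul_update_consV hT_diag hT_cycle haltω, Finset.sum_sub_distrib,
      Finset.sum_neg_distrib]
    ring
  · exact Finset.sum_eq_zero fun i _ => Finset.sum_eq_zero fun j _ => wedge1_self_eq_zero _ v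
end

section
/- Let T be a 3-form on euclidean ℝⁿ, viewed inside the Clifford algebra Cl(ℝⁿ). Then T² (Clifford square) has no component of degree 6; its scalar part is T²₀ = (1/6) Σ_{i,j} ‖T(eᵢ,eⱼ)‖² and its degree-4 part is T²₄ = −2σ_T, where σ_T := (1/2) Σ_k (e_k ⌟ T) ∧ (e_k ⌟ T) and (eᵢ) is an orthonormal basis. -/
/-!  Coefficient model for the Clifford algebra `Cl(ℝⁿ)`: an element is a
function `a : Finset (Fin n) → ℝ`, standing for `Σ_s a s · e_s` where
`e_s = e_{i₁}·…·e_{i_k}` for `s = {i₁ < … < i_k}`.  The Clifford product is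
determined by `eᵢ·eⱼ = −eⱼ·eᵢ (i ≠ j)`, `eᵢ² = −1`.  Exterior forms embed via
the standard linear isomorphism `Λ*(ℝⁿ) ≅ Cl(ℝⁿ)`. -/

open Finset

/-- Sign in the Clifford product `e_s · e_t = cliffSign s t · e_{s Δ t}`. -/
def cliffSign {n : ℕ} (s t : Finset (Fin n)) : ℝ :=
  (-1 : ℝ) ^ (((s ×ˢ t).filter fun p => p.2 < p.1).card + (s ∩ t).card)

/-- The Clifford product in the coefficient model. -/
def cmul {n : ℕ} (a b : Finset (Fin n) → ℝ) : Finset (Fin n) → ℝ :=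
  fun r => ∑ s : Finset (Fin n), ∑ t : Finset (Fin n),
    if symmDiff s t = r then cliffSign s t * a s * b t else 0

/-- Interior product `e_m ⌟ ·` in the coefficient model. -/
def intB {n : ℕ} (m : Fin n) (a : Finset (Fin n) → ℝ) : Finset (Fin n) → ℝ :=
  fun s => if m ∈ s then 0
    else (-1 : ℝ) ^ ((s.filter (· < m)).card) * a (insert m s)

/-- Wedge product in the coefficient model. -/
def wedgeF {n : ℕ} (a b : Finset (Fin n) → ℝ) : Finset (Fin n) → ℝ :=
  fun r => ∑ t ∈ r.powerset,
    (-1 : ℝ) ^ (((t ×ˢ (r \ t)).filter fun p => p.2 < p.1).card)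
      * a t * b (r \ t)

/-- The value `T(e_i, e_j, e_k)` of the 3-form with coefficients `a`. -/
def tval {n : ℕ} (a : Finset (Fin n) → ℝ) (i j k : Fin n) : ℝ :=
  if i = j ∨ j = k ∨ i = k then 0
  else (if i < j then 1 else -1) * (if j < k then 1 else -1)
    * (if i < k then 1 else -1) * a {i, j, k}





lemma sgn_prod {α : Type*} [DecidableEq α] (s : Finset α) (P : α → Prop) [DecidablePred P] :
    (-1:ℝ)^((s.filter P).card) = ∏ x ∈ s, if P x then (-1:ℝ) else 1 := by
  rw [← Finset.prod_const, Finset.prod_filter]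

lemma cliffSign_eq {n : ℕ} (s t : Finset (Fin n)) :
    cliffSign s t = (-1:ℝ)^((s ∩ t).card)
      * ∏ x ∈ s, ∏ y ∈ t, (if y < x then (-1:ℝ) else 1) := by
  rw [cliffSign, pow_add, mul_comm, sgn_prod]
  rw [Finset.prod_product]

lemma hmul {n : ℕ} {x y : Fin n} (h : x ≠ y) :
    (if y < x then (-1:ℝ) else 1) * (if x < y then (-1:ℝ) else 1) = -1 := by
  rcases h.lt_or_gt with h' | h'
  · rw [if_neg (asymm h'), if_pos h']; ring
  · rw [if_pos h', if_neg (asymm h')]; ring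

lemma neg_one_pow_mul_self (k : ℕ) : (-1:ℝ)^k * (-1:ℝ)^k = 1 := by
  rw [← pow_add, ← two_mul, pow_mul]; norm_num

lemma cliffSign_mul_comm {n : ℕ} {s t : Finset (Fin n)} (h : Disjoint s t) :
    cliffSign s t * cliffSign t s = (-1:ℝ)^(s.card * t.card) := by
  rw [cliffSign_eq, cliffSign_eq, inter_comm t s, (Finset.disjoint_iff_inter_eq_empty.1 h), card_empty, pow_zero,
    one_mul, one_mul]
  rw [Finset.prod_comm (s := t) (t := s)]
  rw [← Finset.prod_mul_distrib]
  have : ∀ x ∈ s, (∏ y ∈ t, (if y < x then (-1:ℝ) else 1)) *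
      (∏ y ∈ t, (if x < y then (-1:ℝ) else 1)) = (-1:ℝ)^t.card := by
    intro x hx
    rw [← Finset.prod_mul_distrib]
    rw [Finset.prod_congr rfl (fun y hy => hmul (by
      intro e; exact (Finset.disjoint_left.1 h) hx (e ▸ hy)))]
    simp
  rw [Finset.prod_congr rfl this, Finset.prod_const, ← pow_mul, mul_comm t.card s.card]

lemma cliffSign_self {n : ℕ} {s : Finset (Fin n)} (h : s.card = 3) : cliffSign s s = 1 := by
  obtain ⟨x, y, z, hxy, hxz, hyz, rfl⟩ := Finset.card_eq_three.1 h
  have hx : x ∉ ({y, z} : Finset (Fin n)) := by simp [hxy, hxz]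
  have hy : y ∉ ({z} : Finset (Fin n)) := by simp [hyz]
  rw [cliffSign_eq]
  rw [inter_self, h]
  rw [Finset.prod_insert hx, Finset.prod_insert hy]
  simp only [Finset.prod_insert hx, Finset.prod_insert hy, Finset.prod_singleton]
  rw [if_neg (lt_irrefl x), if_neg (lt_irrefl y), if_neg (lt_irrefl z)]
  have e1 := hmul (n := n) hxy
  have e2 := hmul (n := n) hxz
  have e3 := hmul (n := n) hyz
  have key : ((if y < x then (-1:ℝ) else 1) * (if x < y then (-1:ℝ) else 1)) *
      (((if z < x then (-1:ℝ) else 1) * (if x < z then (-1:ℝ) else 1)) *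
       ((if z < y then (-1:ℝ) else 1) * (if y < z then (-1:ℝ) else 1))) = -1 := by
    rw [e1, e2, e3]; norm_num
  linear_combination -1 * key

lemma cliffSign_insert {n : ℕ} {m : Fin n} {u v : Finset (Fin n)}
    (hmu : m ∉ u) (hmv : m ∉ v) (huv : Disjoint u v) :
    cliffSign (insert m u) (insert m v)
      = -((-1:ℝ)^u.card * (-1:ℝ)^(((u ×ˢ v).filter fun p => p.2 < p.1).card)
          * (-1:ℝ)^((u.filter (· < m)).card) * (-1:ℝ)^((v.filter (· < m)).card)) := by
  rw [cliffSign_eq]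
  have hint : insert m u ∩ insert m v = {m} := by
    rw [← Finset.insert_inter_distrib, Finset.disjoint_iff_inter_eq_empty.1 huv]
    rfl
  rw [hint, Finset.card_singleton, pow_one]
  rw [Finset.prod_insert hmu]
  simp only [Finset.prod_insert hmv]
  rw [if_neg (lt_irrefl m)]
  rw [Finset.prod_mul_distrib]
  have h1 : (∏ y ∈ v, if y < m then (-1:ℝ) else 1) = (-1:ℝ)^((v.filter (· < m)).card) :=
    (sgn_prod v _).symm
  have h2 : (∏ x ∈ u, if m < x then (-1:ℝ) else 1)
      = (-1:ℝ)^u.card * (-1:ℝ)^((u.filter (· < m)).card) := by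
    have : ∀ x ∈ u, (if m < x then (-1:ℝ) else 1) = -1 * (if x < m then (-1:ℝ) else 1) := by
      intro x hx
      have hxm : x ≠ m := fun e => hmu (e ▸ hx)
      rcases hxm.lt_or_gt with h' | h'
      · rw [if_neg (asymm h'), if_pos h']; ring
      · rw [if_pos h', if_neg (asymm h')]; ring
    rw [Finset.prod_congr rfl this, Finset.prod_mul_distrib, Finset.prod_const, sgn_prod]
  have h3 : (∏ x ∈ u, ∏ y ∈ v, if y < x then (-1:ℝ) else 1)
      = (-1:ℝ)^(((u ×ˢ v).filter fun p => p.2 < p.1).card) := by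
    rw [sgn_prod, Finset.prod_product]
  rw [h1, h2, h3]
  ring

example {n : ℕ} (s t : Finset (Fin n)) :
    (symmDiff s t).card + 2 * (s ∩ t).card = s.card + t.card := by
  have h1 : symmDiff s t = (s \ t) ∪ (t \ s) := by
    rw [symmDiff_def, Finset.sup_eq_union]
  rw [h1, Finset.card_union_of_disjoint (disjoint_sdiff_sdiff)]
  have h2 := Finset.card_sdiff_add_card_inter s t
  have h3 := Finset.card_sdiff_add_card_inter t s
  rw [Finset.inter_comm t s] at h3
  omega



lemma tval_sq {n : ℕ} (a : Finset (Fin n) → ℝ) {i j k : Fin n}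
    (h1 : i ≠ j) (h2 : j ≠ k) (h3 : i ≠ k) :
    tval a i j k ^ 2 = a {i, j, k} ^ 2 := by
  rw [tval, if_neg (by tauto)]
  split_ifs <;> ring

lemma fiber_eq {n : ℕ} {p q r : Fin n} (hpq : p ≠ q) (hpr : p ≠ r) (hqr : q ≠ r) :
    (Finset.univ.filter fun x : Fin n × Fin n × Fin n =>
        ({x.1, x.2.1, x.2.2} : Finset (Fin n)) = {p, q, r})
      = {(p,q,r),(p,r,q),(q,p,r),(q,r,p),(r,p,q),(r,q,p)} := by
  ext ⟨i, j, k⟩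
  simp only [Finset.mem_filter, Finset.mem_univ, true_and, Finset.mem_insert,
    Finset.mem_singleton, Prod.mk.injEq]
  constructor
  · intro h
    have hi : i = p ∨ i = q ∨ i = r := by
      have : i ∈ ({p,q,r} : Finset (Fin n)) := h ▸ (by simp)
      simpa using this
    have hj : j = p ∨ j = q ∨ j = r := by
      have : j ∈ ({p,q,r} : Finset (Fin n)) := h ▸ (by simp)
      simpa using this
    have hk : k = p ∨ k = q ∨ k = r := by
      have : k ∈ ({p,q,r} : Finset (Fin n)) := h ▸ (by simp)
      simpa using this
    have hp : p = i ∨ p = j ∨ p = k := by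
      have : p ∈ ({i,j,k} : Finset (Fin n)) := h.symm ▸ (by simp)
      simpa using this
    have hq : q = i ∨ q = j ∨ q = k := by
      have : q ∈ ({i,j,k} : Finset (Fin n)) := h.symm ▸ (by simp)
      simpa using this
    have hr : r = i ∨ r = j ∨ r = k := by
      have : r ∈ ({i,j,k} : Finset (Fin n)) := h.symm ▸ (by simp)
      simpa using this
    rcases hi with rfl | rfl | rfl <;> rcases hj with rfl | rfl | rfl <;>
      rcases hk with rfl | rfl | rfl <;> simp_all <;>
      (try rcases hr with rfl | rfl) <;> (try rcases hr with rfl | rfl | rfl) <;> (try simp_all)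
  · rintro (⟨rfl,rfl,rfl⟩|⟨rfl,rfl,rfl⟩|⟨rfl,rfl,rfl⟩|⟨rfl,rfl,rfl⟩|⟨rfl,rfl,rfl⟩|⟨rfl,rfl,rfl⟩) <;>
    · ext x; simp only [Finset.mem_insert, Finset.mem_singleton]; try tauto



lemma card_symmDiff_aux {n : ℕ} (s t : Finset (Fin n)) :
    (symmDiff s t).card + 2 * (s ∩ t).card = s.card + t.card := by
  have h1 : symmDiff s t = (s \ t) ∪ (t \ s) := by
    rw [symmDiff_def, Finset.sup_eq_union]
  rw [h1, Finset.card_union_of_disjoint (disjoint_sdiff_sdiff)]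
  have h2 := Finset.card_sdiff_add_card_inter s t
  have h3 := Finset.card_sdiff_add_card_inter t s
  rw [Finset.inter_comm t s] at h3
  omega

lemma part1 {n : ℕ} (a : Finset (Fin n) → ℝ) (ha : ∀ s, a s ≠ 0 → s.card = 3)
    (r : Finset (Fin n)) (hr : r.card = 6) : cmul a a r = 0 := by
  have key : ∀ s t : Finset (Fin n),
      (if symmDiff s t = r then cliffSign s t * a s * a t else 0)
      = -(if symmDiff t s = r then cliffSign t s * a t * a s else 0) := by
    intro s t
    rw [symmDiff_comm t s]
    by_cases hst : symmDiff s t = r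
    · rw [if_pos hst, if_pos hst]
      by_cases has : a s = 0
      · rw [has]; ring
      by_cases hat : a t = 0
      · rw [hat]; ring
      have hcs := ha s has
      have hct := ha t hat
      have hd : Disjoint s t := by
        have := card_symmDiff_aux s t
        rw [hst, hr, hcs, hct] at this
        rw [Finset.disjoint_iff_inter_eq_empty, ← Finset.card_eq_zero]
        omega
      have hmc := cliffSign_mul_comm hd
      rw [hcs, hct] at hmc
      norm_num at hmc
      have hsq : cliffSign t s * cliffSign t s = 1 := by
        rw [cliffSign]; exact neg_one_pow_mul_self _
      have : cliffSign s t = -cliffSign t s := by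
        have := congrArg (· * cliffSign t s) hmc
        rw [mul_assoc, hsq, mul_one] at this
        rw [this]; ring
      rw [this]; ring
    · rw [if_neg hst, if_neg hst]; ring
  have hneg : cmul a a r = -cmul a a r := by
    calc cmul a a r
        = ∑ s : Finset (Fin n), ∑ t : Finset (Fin n),
            -(if symmDiff t s = r then cliffSign t s * a t * a s else 0) := by
          rw [cmul]
          exact Finset.sum_congr rfl fun s _ => Finset.sum_congr rfl fun t _ => key s t
      _ = -(∑ s : Finset (Fin n), ∑ t : Finset (Fin n),
            (if symmDiff t s = r then cliffSign t s * a t * a s else 0)) := by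
          simp [Finset.sum_neg_distrib]
      _ = -cmul a a r := by rw [Finset.sum_comm, cmul]
  linarith

set_option maxHeartbeats 1000000 in
lemma part2 {n : ℕ} (a : Finset (Fin n) → ℝ) (ha : ∀ s, a s ≠ 0 → s.card = 3) :
    cmul a a ∅
      = (1 / 6 : ℝ) * ∑ i : Fin n, ∑ j : Fin n, ∑ k : Fin n, (tval a i j k) ^ 2 := by
  have hL : cmul a a ∅ = ∑ s : Finset (Fin n), a s ^ 2 := by
    rw [cmul]
    have h1 : ∀ s t : Finset (Fin n), (symmDiff s t = ∅) ↔ (t = s) := by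
      intro s t
      rw [← Finset.bot_eq_empty, symmDiff_eq_bot, eq_comm]
    refine Finset.sum_congr rfl fun s _ => ?_
    rw [Finset.sum_congr rfl fun t _ => if_congr (h1 s t) rfl rfl]
    rw [Finset.sum_ite_eq' Finset.univ s (fun t => cliffSign s t * a s * a t),
      if_pos (Finset.mem_univ s)]
    by_cases has : a s = 0
    · rw [has]; ring
    · rw [cliffSign_self (ha s has)]; ring
  -- RHS
  have hR : ∑ i : Fin n, ∑ j : Fin n, ∑ k : Fin n, (tval a i j k) ^ 2
      = 6 * ∑ s : Finset (Fin n), a s ^ 2 := by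
    have e1 : ∑ i : Fin n, ∑ j : Fin n, ∑ k : Fin n, (tval a i j k) ^ 2
        = ∑ x : Fin n × Fin n × Fin n, (tval a x.1 x.2.1 x.2.2) ^ 2 := by
      simp only [Fintype.sum_prod_type]
    rw [e1]
    rw [← Finset.sum_fiberwise Finset.univ
      (fun x : Fin n × Fin n × Fin n => ({x.1, x.2.1, x.2.2} : Finset (Fin n)))
      (fun x => (tval a x.1 x.2.1 x.2.2) ^ 2)]
    rw [Finset.mul_sum]
    refine Finset.sum_congr rfl fun y _ => ?_
    by_cases hay : a y = 0
    · rw [hay]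
      rw [Finset.sum_eq_zero, ]
      · ring
      intro x hx
      obtain ⟨-, hxy⟩ := Finset.mem_filter.1 hx
      by_cases hd : x.1 ≠ x.2.1 ∧ x.2.1 ≠ x.2.2 ∧ x.1 ≠ x.2.2
      · rw [tval_sq a hd.1 hd.2.1 hd.2.2, hxy, hay]; ring
      · rw [tval, if_pos (by tauto)]; ring
    · have hy3 := ha y hay
      obtain ⟨p, q, r, hpq, hpr, hqr, rfl⟩ := Finset.card_eq_three.1 hy3
      rw [fiber_eq hpq hpr hqr]
      have hsum : ∀ x ∈ ({(p,q,r),(p,r,q),(q,p,r),(q,r,p),(r,p,q),(r,q,p)} :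
          Finset (Fin n × Fin n × Fin n)), (tval a x.1 x.2.1 x.2.2) ^ 2 = a {p,q,r} ^ 2 := by
        intro x hx
        simp only [Finset.mem_insert, Finset.mem_singleton] at hx
        rcases hx with rfl|rfl|rfl|rfl|rfl|rfl <;>
          rw [tval_sq a (by tauto) (by tauto) (by tauto)] <;>
          exact congrArg (fun w => a w ^ 2) (by ext z; simp; tauto)
      rw [Finset.sum_congr rfl hsum, Finset.sum_const]
      have hc : ({(p,q,r),(p,r,q),(q,p,r),(q,r,p),(r,p,q),(r,q,p)} :
          Finset (Fin n × Fin n × Fin n)).card = 6 := by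
        repeat rw [Finset.card_insert_of_notMem (by simp [Prod.ext_iff]; tauto)]
        rw [Finset.card_singleton]
      rw [hc]
      ring
  rw [hL, hR]
  ring





lemma symmDiff_insert {n : ℕ} {m : Fin n} {r u : Finset (Fin n)}
    (hm : m ∉ r) (hu : u ⊆ r) :
    symmDiff (insert m u) (insert m (r \ u)) = r := by
  ext x
  simp only [Finset.mem_symmDiff, Finset.mem_insert, Finset.mem_sdiff]
  by_cases hxm : x = m
  · subst hxm; simp [hm]
  · constructor
    · rintro (⟨h1 | h1, h2⟩ | ⟨h1 | h1, h2⟩)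
      · exact absurd h1 hxm
      · exact hu h1
      · exact absurd h1 hxm
      · exact h1.1
    · intro hx
      by_cases hxu : x ∈ u
      · left; exact ⟨Or.inr hxu, by tauto⟩
      · right; exact ⟨Or.inr ⟨hx, hxu⟩, by tauto⟩

lemma part3 {n : ℕ} (a : Finset (Fin n) → ℝ) (ha : ∀ s, a s ≠ 0 → s.card = 3)
    (r : Finset (Fin n)) (hr : r.card = 4) :
    cmul a a r
      = (-2 : ℝ) * ((1 / 2 : ℝ) * ∑ m : Fin n, wedgeF (intB m a) (intB m a) r) := by
  classical
  set g : Finset (Fin n) × Finset (Fin n) → ℝ := fun p =>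
    if symmDiff p.1 p.2 = r then cliffSign p.1 p.2 * a p.1 * a p.2 else 0 with hg
  set e : Fin n × Finset (Fin n) → Finset (Fin n) × Finset (Fin n) := fun q =>
    (insert q.1 q.2, insert q.1 (r \ q.2)) with he
  -- LHS as sum over pairs
  have L1 : cmul a a r = ∑ p ∈ Finset.univ ×ˢ Finset.univ, g p := by
    rw [cmul, ← Finset.sum_product']
  -- RHS pointwise term
  have key : ∀ m : Fin n, ∀ u ∈ r.powerset, m ∉ r →
      g (e (m, u)) = -((-1 : ℝ) ^ (((u ×ˢ (r \ u)).filter fun p => p.2 < p.1).card)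
        * intB m a u * intB m a (r \ u)) := by
    intro m u hu hm
    rw [Finset.mem_powerset] at hu
    have hmu : m ∉ u := fun h => hm (hu h)
    have hmv : m ∉ r \ u := fun h => hm (Finset.mem_sdiff.1 h).1
    have hd : Disjoint u (r \ u) := Finset.disjoint_sdiff
    rw [hg, he]
    simp only
    rw [if_pos (symmDiff_insert hm hu)]
    rw [intB, intB]
    simp only [if_neg hmu, if_neg hmv]
    by_cases hA : a (insert m u) = 0
    · rw [hA]; ring
    by_cases hB : a (insert m (r \ u)) = 0
    · rw [hB]; ring
    have hcu : u.card = 2 := by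
      have h3 := ha _ hA
      rw [Finset.card_insert_of_notMem hmu] at h3
      omega
    rw [cliffSign_insert hmu hmv hd, hcu]
    ring
  -- RHS
  have R1 : (-2 : ℝ) * ((1 / 2 : ℝ) * ∑ m : Fin n, wedgeF (intB m a) (intB m a) r)
      = ∑ m : Fin n, ∑ u ∈ r.powerset,
          -((-1 : ℝ) ^ (((u ×ˢ (r \ u)).filter fun p => p.2 < p.1).card)
            * intB m a u * intB m a (r \ u)) := by
    rw [Finset.mul_sum, Finset.mul_sum]
    refine Finset.sum_congr rfl fun m _ => ?_
    rw [wedgeF, Finset.mul_sum, Finset.mul_sum]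
    exact Finset.sum_congr rfl fun u _ => by ring
  -- kill m ∈ r terms on RHS
  have R2 : ∑ m : Fin n, ∑ u ∈ r.powerset,
          -((-1 : ℝ) ^ (((u ×ˢ (r \ u)).filter fun p => p.2 < p.1).card)
            * intB m a u * intB m a (r \ u))
      = ∑ m ∈ Finset.univ.filter (· ∉ r), ∑ u ∈ r.powerset, g (e (m, u)) := by
    rw [← Finset.sum_filter_add_sum_filter_not Finset.univ (· ∉ r)]
    have hz : ∑ m ∈ Finset.univ.filter (fun m => ¬(m ∉ r)), ∑ u ∈ r.powerset,
        -((-1 : ℝ) ^ (((u ×ˢ (r \ u)).filter fun p => p.2 < p.1).card)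
            * intB m a u * intB m a (r \ u)) = 0 := by
      refine Finset.sum_eq_zero fun m hm => Finset.sum_eq_zero fun u hu => ?_
      simp only [Finset.mem_filter, not_not] at hm
      rw [Finset.mem_powerset] at hu
      by_cases hmu : m ∈ u
      · rw [intB, if_pos hmu]; ring
      · have : m ∈ r \ u := Finset.mem_sdiff.2 ⟨hm.2, hmu⟩
        rw [intB, intB, if_pos this]; ring
    rw [hz, add_zero]
    refine Finset.sum_congr rfl fun m hm => Finset.sum_congr rfl fun u hu => ?_
    simp only [Finset.mem_filter] at hm
    exact (key m u hu hm.2).symm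
  -- now identify LHS with the (m,u) sum via bijection
  have L2 : ∑ p ∈ Finset.univ ×ˢ Finset.univ, g p
      = ∑ m ∈ Finset.univ.filter (· ∉ r), ∑ u ∈ r.powerset, g (e (m, u)) := by
    rw [← Finset.sum_product' (f := fun m u => g (e (m, u)))]
    rw [← Finset.sum_filter_ne_zero ((Finset.univ.filter (· ∉ r)) ×ˢ r.powerset)]
    rw [← Finset.sum_filter_ne_zero (Finset.univ ×ˢ Finset.univ)]
    refine (Finset.sum_bij (fun q _ => e q) ?_ ?_ ?_ (fun q hq => rfl)).symm
    · intro q hq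
      rw [Finset.mem_filter] at hq ⊢
      exact ⟨Finset.mem_product.2 ⟨Finset.mem_univ _, Finset.mem_univ _⟩, hq.2⟩
    · rintro ⟨m1, u1⟩ hq1 ⟨m2, u2⟩ hq2 heq
      rw [Finset.mem_filter, Finset.mem_product, Finset.mem_filter, Finset.mem_powerset] at hq1 hq2
      obtain ⟨⟨⟨-, hm1⟩, hu1⟩, -⟩ := hq1
      obtain ⟨⟨⟨-, hm2⟩, hu2⟩, -⟩ := hq2
      have h1 : insert m1 u1 = insert m2 u2 := congrArg Prod.fst heq
      have hmm : m1 = m2 := by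
        have : m1 ∈ insert m2 u2 := h1 ▸ Finset.mem_insert_self _ _
        rcases Finset.mem_insert.1 this with h | h
        · exact h
        · exact absurd (hu2 h) hm1
      subst hmm
      have hmu1 : m1 ∉ u1 := fun h => hm1 (hu1 h)
      have hmu2 : m1 ∉ u2 := fun h => hm2 (hu2 h)
      have huu : u1 = u2 := by
        have := congrArg (fun w => w.erase m1) h1
        simpa [Finset.erase_insert hmu1, Finset.erase_insert hmu2] using this
      rw [huu]
    · intro p hp
      rw [Finset.mem_filter] at hp
      obtain ⟨-, hgp⟩ := hp
      have hst : symmDiff p.1 p.2 = r := by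
        by_contra hc
        exact hgp (by rw [hg]; simp only [if_neg hc])
      have ha1 : a p.1 ≠ 0 := by
        intro h0; exact hgp (by rw [hg]; simp only [hst, if_pos]; rw [h0]; ring)
      have ha2 : a p.2 ≠ 0 := by
        intro h0; exact hgp (by rw [hg]; simp only [hst, if_pos]; rw [h0]; ring)
      have hc1 := ha _ ha1
      have hc2 := ha _ ha2
      have hci : (p.1 ∩ p.2).card = 1 := by
        have := card_symmDiff_aux p.1 p.2
        rw [hst, hr, hc1, hc2] at this
        omega
      obtain ⟨m, hm⟩ := Finset.card_eq_one.1 hci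
      have hm1 : m ∈ p.1 := Finset.mem_inter.1 (hm ▸ Finset.mem_singleton_self m) |>.1
      have hm2 : m ∈ p.2 := Finset.mem_inter.1 (hm ▸ Finset.mem_singleton_self m) |>.2
      have hmr : m ∉ r := by
        rw [← hst]
        rw [Finset.mem_symmDiff]
        tauto
      have hstx : ∀ x, x ∈ r ↔ (x ∈ p.1 ∧ x ∉ p.2) ∨ (x ∈ p.2 ∧ x ∉ p.1) := by
        intro x
        rw [← hst, Finset.mem_symmDiff]
      have hmx : ∀ x, (x ∈ p.1 ∧ x ∈ p.2) ↔ x = m := by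
        intro x
        rw [← Finset.mem_inter, hm, Finset.mem_singleton]
      have he1 : insert m (p.1 ∩ r) = p.1 := by
        ext x
        have h1 := hstx x
        have h2 := hmx x
        simp only [Finset.mem_insert, Finset.mem_inter]
        constructor
        · rintro (rfl | ⟨h, -⟩)
          · exact hm1
          · exact h
        · intro hx
          by_cases hx2 : x ∈ p.2
          · left; exact h2.1 ⟨hx, hx2⟩
          · right; exact ⟨hx, h1.2 (Or.inl ⟨hx, hx2⟩)⟩
      have he2 : insert m (r \ (p.1 ∩ r)) = p.2 := by
        ext x
        have h1 := hstx x
        have h2 := hmx x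
        simp only [Finset.mem_insert, Finset.mem_sdiff, Finset.mem_inter]
        constructor
        · rintro (rfl | ⟨hxr, hxn⟩)
          · exact hm2
          · rcases h1.1 hxr with ⟨hp1, -⟩ | ⟨hp2, -⟩
            · exact absurd ⟨hp1, hxr⟩ hxn
            · exact hp2
        · intro hx
          by_cases hx1 : x ∈ p.1
          · left; exact h2.1 ⟨hx1, hx⟩
          · right
            have hxr : x ∈ r := h1.2 (Or.inr ⟨hx, hx1⟩)
            exact ⟨hxr, fun hh => hx1 hh.1⟩
      refine ⟨(m, p.1 ∩ r), ?_, ?_⟩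
      · rw [Finset.mem_filter, Finset.mem_product, Finset.mem_filter, Finset.mem_powerset]
        refine ⟨⟨⟨Finset.mem_univ _, hmr⟩, Finset.inter_subset_right⟩, ?_⟩
        have : e (m, p.1 ∩ r) = p := Prod.ext he1 he2
        rw [this]
        exact hgp
      · exact Prod.ext he1 he2
  rw [L1, L2, R1, R2]


/-- For a 3-form `T` on `ℝⁿ`, viewed inside the Clifford algebra,
the Clifford square `T²` has no component of degree 6; its scalar part is
`T²₀ = (1/6) Σ_{i,j} ‖T(eᵢ,eⱼ)‖²` and its degree-4 part is `T²₄ = −2σ_T`,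
where `σ_T = (1/2) Σ_k (e_k ⌟ T) ∧ (e_k ⌟ T)`. -/
theorem threeform_clifford_square (n : ℕ)
    (a : Finset (Fin n) → ℝ) (ha : ∀ s, a s ≠ 0 → s.card = 3) :
    (∀ s : Finset (Fin n), s.card = 6 → cmul a a s = 0)
    ∧ cmul a a ∅
        = (1 / 6 : ℝ) * ∑ i : Fin n, ∑ j : Fin n, ∑ k : Fin n, (tval a i j k) ^ 2
    ∧ (∀ s : Finset (Fin n), s.card = 4 →
        cmul a a s
          = (-2 : ℝ) * ((1 / 2 : ℝ) * ∑ m : Fin n, wedgeF (intB m a) (intB m a) s)) := by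
  refine ⟨fun s hs => part1 a ha s hs, part2 a ha, fun s hs => part3 a ha s hs⟩
end

section
/- In the Clifford algebra Cl(ℝ⁴) acting on the 4-dimensional complex spinor space Δ₄, the determinant of the endomorphism given by a + ω + f·e₁₂₃₄, where a, f are scalars and ω is a 2-form with self-dual part ω₊ and anti-self-dual part ω₋, equals [(a+f)² + 4‖ω₊‖²]·[(a−f)² + 4‖ω₋‖²]. -/
/-- The Levi-Civita symbol `ε_{ijkl}` on `ℝ⁴` (for the chosen orientation). -/
def eps4 (i j k l : Fin 4) : ℝ :=
  if i = j ∨ i = k ∨ i = l ∨ j = k ∨ j = l ∨ k = l then 0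
  else -((if i < j then 1 else -1) * (if i < k then 1 else -1)
    * (if i < l then 1 else -1) * (if j < k then 1 else -1)
    * (if j < l then 1 else -1) * (if k < l then 1 else -1))

/-- The Hodge star of a 2-form on `ℝ⁴`, `(*ω)_{ij} = (1/2) Σ_{kl} ε_{ijkl} ω_{kl}`. -/
noncomputable def hodge (ω : Fin 4 → Fin 4 → ℝ) : Fin 4 → Fin 4 → ℝ :=
  fun i j => (1 / 2 : ℝ) * ∑ k : Fin 4, ∑ l : Fin 4, eps4 i j k l * ω k l

/-- Self-dual part `ω₊ = (ω + *ω)/2` of a 2-form on `ℝ⁴`. -/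
noncomputable def sdPart (ω : Fin 4 → Fin 4 → ℝ) : Fin 4 → Fin 4 → ℝ :=
  fun i j => (ω i j + hodge ω i j) / 2

/-- Anti-self-dual part `ω₋ = (ω − *ω)/2` of a 2-form on `ℝ⁴`. -/
noncomputable def asdPart (ω : Fin 4 → Fin 4 → ℝ) : Fin 4 → Fin 4 → ℝ :=
  fun i j => (ω i j - hodge ω i j) / 2

/-- The squared norm of a 2-form (with the tensorial normalisation
`‖eᵢ ∧ eⱼ‖² = 1/2`). -/
noncomputable def normSq2 (η : Fin 4 → Fin 4 → ℝ) : ℝ :=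
  (1 / 4 : ℝ) * ∑ i : Fin 4, ∑ j : Fin 4, (η i j) ^ 2

/-!
The volume element `G = c₀c₁c₂c₃` squares to `1`, has trace zero and commutes with every
bivector `W`, so `Δ` splits into two `2`-dimensional eigenspaces `Δ±` of `G`. On `Δ±` the element
acts as `(a ± f) + W`, where `W` is traceless with `W² = -|ω|² ± 2 Pf(ω)` scalar, so its
determinant there is `(a ± f)² + |ω|² ∓ 2 Pf(ω) = (a ± f)² + 4‖ω±‖²`. Both blocks are read off
from traces against the projection `(1 + G)/2`, using `2 det S = (tr S)² - tr S²` in dimension `2`.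
-/

open LinearMap Module

section

variable {K V : Type*} [Field K] [AddCommGroup V] [Module K V]

theorem LinearMap.two_mul_det_eq_of_finrank_eq_two (hV : finrank K V = 2) (S : End K V) :
    2 * LinearMap.det S = trace K V S ^ 2 - trace K V (S * S) := by
  have : FiniteDimensional K V := Module.finite_of_finrank_eq_succ hV
  let b : Basis (Fin 2) K V := (finBasis K V).reindex (finCongr hV)
  rw [← det_toMatrix b, trace_eq_matrix_trace K b, trace_eq_matrix_trace K b, toMatrix_mul,
    Matrix.det_fin_two, Matrix.trace_fin_two, Matrix.trace_fin_two]
  simp only [Matrix.mul_apply, Fin.sum_univ_two]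
  ring

variable {P T : End K V}

theorem Commute.mapsTo_range (h : Commute P T) : ∀ x ∈ range P, T x ∈ range P := by
  rintro _ ⟨y, rfl⟩
  exact ⟨T y, by rw [← Module.End.mul_apply, h.eq, Module.End.mul_apply]⟩

theorem IsIdempotentElem.trace_mul_eq_trace_restrict [FiniteDimensional K V]
    (hP : IsIdempotentElem P) (h : Commute P T) :
    trace K V (T * P) = trace K (range P) (T.restrict h.mapsTo_range) := by
  rw [← trace_restrict_eq_of_forall_mem (range P) (T * P) fun x => h.mapsTo_range _ ⟨x, rfl⟩]
  congr 1
  ext ⟨x, hx⟩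
  simp [hP.mem_range_iff.mp hx]

theorem IsIdempotentElem.det_eq_det_restrict_mul_det_restrict [FiniteDimensional K V]
    (hP : IsIdempotentElem P) (h : Commute P T) :
    LinearMap.det T = LinearMap.det (T.restrict h.mapsTo_range) *
      LinearMap.det (T.restrict ((Commute.one_left T).sub_left h).mapsTo_range) := by
  have hcompl : IsCompl (range P) (range (1 - P)) := hP.ker_eq_range_one_sub ▸ hP.isCompl
  have hconj : (Submodule.prodEquivOfIsCompl _ _ hcompl).conj
      ((T.restrict h.mapsTo_range).prodMap
        (T.restrict ((Commute.one_left T).sub_left h).mapsTo_range)) = T := by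
    ext x
    obtain ⟨⟨y, z⟩, rfl⟩ := (Submodule.prodEquivOfIsCompl _ _ hcompl).surjective x
    simp [LinearEquiv.conj_apply]
  conv_lhs => rw [← hconj]
  rw [LinearEquiv.conj_apply, LinearMap.comp_assoc, det_conj, det_prodMap]

theorem IsIdempotentElem.four_mul_det_eq [FiniteDimensional K V] (hP : IsIdempotentElem P)
    (h : Commute P T) (hP₂ : finrank K (range P) = 2) (hQ₂ : finrank K (range (1 - P)) = 2) :
    4 * LinearMap.det T =
      (trace K V (T * P) ^ 2 - trace K V (T * T * P)) *
        (trace K V (T * (1 - P)) ^ 2 - trace K V (T * T * (1 - P))) := by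
  have hQ : Commute (1 - P) T := (Commute.one_left T).sub_left h
  have hdetP : 2 * LinearMap.det (T.restrict h.mapsTo_range) =
      trace K _ (T.restrict h.mapsTo_range) ^ 2 -
        trace K _ ((T * T).restrict (h.mul_right h).mapsTo_range) :=
    two_mul_det_eq_of_finrank_eq_two hP₂ _
  have hdetQ : 2 * LinearMap.det (T.restrict hQ.mapsTo_range) =
      trace K _ (T.restrict hQ.mapsTo_range) ^ 2 -
        trace K _ ((T * T).restrict (hQ.mul_right hQ).mapsTo_range) :=
    two_mul_det_eq_of_finrank_eq_two hQ₂ _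
  rw [hP.det_eq_det_restrict_mul_det_restrict h, hP.trace_mul_eq_trace_restrict h,
    hP.trace_mul_eq_trace_restrict (h.mul_right h), hP.one_sub.trace_mul_eq_trace_restrict hQ,
    hP.one_sub.trace_mul_eq_trace_restrict (hQ.mul_right hQ), ← hdetP, ← hdetQ]
  ring

end

section CharZero

variable {K V : Type*} [Field K] [CharZero K] [AddCommGroup V] [Module K V]

theorem IsIdempotentElem.finrank_range_eq_of_trace_eq [FiniteDimensional K V] {P : End K V}
    (hP : IsIdempotentElem P) {n : ℕ} (h : trace K V P = n) : finrank K (range P) = n := by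
  exact_mod_cast ((isProj_range_iff_isIdempotentElem P).mpr hP).trace.symm.trans h

theorem LinearMap.trace_eq_zero_of_mul_eq_neg_mul [FiniteDimensional K V] {X S : End K V}
    (hX : IsUnit X) (h : X * S = -(S * X)) : trace K V S = 0 := by
  obtain ⟨u, rfl⟩ := hX
  have h' : trace K V S = -trace K V S := calc
    trace K V S = trace K V (↑u⁻¹ * (↑u * S)) := by rw [← mul_assoc, Units.inv_mul, one_mul]
    _ = trace K V (↑u * S * ↑u⁻¹) := trace_mul_comm K _ _
    _ = -trace K V S := by rw [h, neg_mul, mul_assoc, Units.mul_inv, mul_one, map_neg]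
  linear_combination h' / 2

variable {G W : End K V} {α β : K}

theorem trace_sq_sub_trace_mul_self_mul_half_one_add (hV : finrank K V = 4) (hG : G * G = 1)
    (hGW : Commute G W) (hW : W * W = α • 1 + β • G) (trG : trace K V G = 0)
    (trW : trace K V W = 0) (trWG : trace K V (W * G) = 0) (l m : K) :
    trace K V ((l • 1 + W + m • G) * ((2⁻¹ : K) • (1 + G))) ^ 2 -
      trace K V ((l • 1 + W + m • G) * (l • 1 + W + m • G) * ((2⁻¹ : K) • (1 + G))) =
      2 * ((l + m) ^ 2 - α - β) := by
  have : FiniteDimensional K V := Module.finite_of_finrank_eq_succ hV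
  have tr1 : trace K V 1 = 4 := by rw [trace_one, hV, Nat.cast_ofNat]
  have hTP : (l • 1 + W + m • G) * ((2⁻¹ : K) • (1 + G)) =
      (2⁻¹ : K) • ((l + m) • 1 + W + (l + m) • G + W * G) := by
    simp only [mul_smul_comm, mul_add, add_mul, smul_mul_assoc, one_mul, mul_one, hG]
    module
  have hT2P : (l • 1 + W + m • G) * (l • 1 + W + m • G) * ((2⁻¹ : K) • (1 + G)) =
      (2⁻¹ : K) • (((l + m) ^ 2 + α + β) • 1 + (2 * (l + m)) • W + ((l + m) ^ 2 + α + β) • G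
        + (2 * (l + m)) • (W * G)) := by
    simp only [mul_smul_comm, mul_add, add_mul, smul_mul_assoc, one_mul, mul_one, hG, hW, hGW.eq]
    simp only [mul_assoc, hG, mul_one]
    module
  rw [hTP, hT2P]
  simp only [map_smul, map_add, tr1, trG, trW, trWG, smul_eq_mul]
  ring

theorem det_smul_one_add_add_smul_of_involution (hV : finrank K V = 4) (hG : G * G = 1)
    (hGW : Commute G W) (hW : W * W = α • 1 + β • G) (trG : trace K V G = 0)
    (trW : trace K V W = 0) (trWG : trace K V (W * G) = 0) (l m : K) :
    LinearMap.det (l • 1 + W + m • G) = ((l + m) ^ 2 - α - β) * ((l - m) ^ 2 - α + β) := by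
  have : FiniteDimensional K V := Module.finite_of_finrank_eq_succ hV
  have tr1 : trace K V 1 = 4 := by rw [trace_one, hV, Nat.cast_ofNat]
  have hP : IsIdempotentElem ((2⁻¹ : K) • (1 + G)) := by
    simp only [IsIdempotentElem, smul_mul_smul, mul_add, add_mul, one_mul, mul_one, hG]
    module
  have hQ : 1 - (2⁻¹ : K) • (1 + G) = (2⁻¹ : K) • (1 + -G) := by module
  have hGT : Commute G (l • 1 + W + m • G) :=
    (((Commute.one_right G).smul_right l).add_right hGW).add_right ((Commute.refl G).smul_right m)
  have hPT : Commute ((2⁻¹ : K) • (1 + G)) (l • 1 + W + m • G) :=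
    ((Commute.one_left _).add_left hGT).smul_left _
  have trP : trace K V ((2⁻¹ : K) • (1 + G)) = 2 := by
    simp only [map_smul, map_add, tr1, trG, smul_eq_mul]
    norm_num
  have h4 := hP.four_mul_det_eq hPT (hP.finrank_range_eq_of_trace_eq trP)
    (hP.one_sub.finrank_range_eq_of_trace_eq (by rw [map_sub, tr1, trP]; norm_num))
  have hplus := trace_sq_sub_trace_mul_self_mul_half_one_add hV hG hGW hW trG trW trWG l m
  -- the `-1`-eigenspace block is the `+1`-eigenspace block of the involution `-G`
  have hminus := trace_sq_sub_trace_mul_self_mul_half_one_add (G := -G) (β := -β) hV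
    (by rw [neg_mul_neg, hG]) hGW.neg_left (by rw [hW, neg_smul_neg])
    (by rw [map_neg, trG, neg_zero]) trW (by rw [mul_neg, map_neg, trWG, neg_zero]) l (-m)
  rw [neg_smul_neg] at hminus
  rw [hQ, hplus, hminus] at h4
  linear_combination h4 / 4

end CharZero

def CliffordRelations (K : Type*) {A ι : Type*} [Field K] [Ring A] [Algebra K A] [DecidableEq ι]
    (c : ι → A) : Prop :=
  ∀ i j, c i * c j + c j * c i = if i = j then (-2 : K) • (1 : A) else 0

def cliffordVolume {A : Type*} [Ring A] (c : Fin 4 → A) : A := c 0 * c 1 * c 2 * c 3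

def cliffordBivector {K A ι : Type*} [Field K] [Ring A] [Algebra K A] [Fintype ι]
    (c : ι → A) (ω : ι → ι → K) : A :=
  (1 / 2 : K) • ∑ i, ∑ j, ω i j • (c i * c j)

def pfaffian {R : Type*} [CommRing R] (ω : Fin 4 → Fin 4 → R) : R :=
  ω 0 1 * ω 2 3 - ω 0 2 * ω 1 3 + ω 0 3 * ω 1 2

namespace CliffordRelations

section Basic

variable {K A ι : Type*} [Field K] [Ring A] [Algebra K A] [DecidableEq ι] {c : ι → A}

theorem mul_self [CharZero K] (hc : CliffordRelations K c) (i : ι) : c i * c i = -1 := by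
  have h := congrArg ((2 : K)⁻¹ • ·) (hc i i)
  simpa [← two_smul K, smul_smul] using h

theorem mul_comm_of_ne (hc : CliffordRelations K c) {i j : ι} (h : i ≠ j) :
    c i * c j = -(c j * c i) := by
  rw [eq_neg_iff_add_eq_zero, hc i j, if_neg h]

theorem mul_mul_self_left [CharZero K] (hc : CliffordRelations K c) (i : ι) (x : A) :
    c i * (c i * x) = -x := by
  rw [← mul_assoc, hc.mul_self, neg_one_mul]

theorem mul_comm_of_lt [LinearOrder ι] (hc : CliffordRelations K c) {i j : ι} (h : j < i) :
    c i * c j = -(c j * c i) :=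
  hc.mul_comm_of_ne h.ne'

theorem mul_mul_comm_of_ne (hc : CliffordRelations K c) {i j : ι} (h : i ≠ j) (x : A) :
    c i * (c j * x) = -(c j * (c i * x)) := by
  rw [← mul_assoc, hc.mul_comm_of_ne h, neg_mul, mul_assoc]

theorem mul_mul_comm_of_lt [LinearOrder ι] (hc : CliffordRelations K c) {i j : ι} (h : j < i)
    (x : A) : c i * (c j * x) = -(c j * (c i * x)) :=
  hc.mul_mul_comm_of_ne h.ne' x

theorem isUnit [CharZero K] (hc : CliffordRelations K c) (i : ι) : IsUnit (c i) :=
  ⟨⟨c i, -c i, by rw [mul_neg, hc.mul_self, neg_neg], by rw [neg_mul, hc.mul_self, neg_neg]⟩, rfl⟩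

end Basic

section Dim4

variable {K A : Type*} [Field K] [CharZero K] [Ring A] [Algebra K A] {c : Fin 4 → A}
  (hc : CliffordRelations K c)
include hc

theorem volume_mul_self : cliffordVolume c * cliffordVolume c = 1 := by
  simp only [cliffordVolume, mul_assoc, hc.mul_mul_comm_of_lt, hc.mul_self, Fin.reduceLT, neg_neg,
    mul_neg, mul_one]

theorem volume_mul (i : Fin 4) : cliffordVolume c * c i = -(c i * cliffordVolume c) := by
  fin_cases i <;>
    simp [cliffordVolume, mul_assoc, hc.mul_mul_self_left, hc.mul_mul_comm_of_lt, hc.mul_self,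
      hc.mul_comm_of_lt]

theorem mul_volume (i : Fin 4) : c i * cliffordVolume c = -(cliffordVolume c * c i) :=
  neg_eq_iff_eq_neg.mp (hc.volume_mul i).symm

theorem commute_volume_mul (i j : Fin 4) : Commute (cliffordVolume c) (c i * c j) := by
  rw [Commute, SemiconjBy, ← mul_assoc, hc.volume_mul, neg_mul, mul_assoc, hc.volume_mul, mul_neg,
    neg_neg, mul_assoc]

theorem commute_volume_bivector (ω : Fin 4 → Fin 4 → K) :
    Commute (cliffordVolume c) (cliffordBivector c ω) :=
  .smul_right (.sum_right _ _ _ fun i _ => .sum_right _ _ _ fun j _ =>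
    (hc.commute_volume_mul i j).smul_right _) _

variable {ω : Fin 4 → Fin 4 → K} (hω : ∀ i j, ω i j = -ω j i)
include hω

theorem bivector_eq : cliffordBivector c ω =
    ω 0 1 • (c 0 * c 1) + ω 0 2 • (c 0 * c 2) + ω 0 3 • (c 0 * c 3) + ω 1 2 • (c 1 * c 2)
      + ω 1 3 • (c 1 * c 3) + ω 2 3 • (c 2 * c 3) := by
  have hdiag (i : Fin 4) : ω i i = 0 := by linear_combination hω i i / 2
  simp only [cliffordBivector, Fin.sum_univ_four, hdiag, zero_smul, hω 1 0, hω 2 0, hω 3 0,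
    hω 2 1, hω 3 1, hω 3 2, neg_smul, hc.mul_comm_of_lt, Fin.reduceLT, smul_neg, neg_neg]
  module

theorem bivector_mul_self : cliffordBivector c ω * cliffordBivector c ω =
    (-(ω 0 1 ^ 2 + ω 0 2 ^ 2 + ω 0 3 ^ 2 + ω 1 2 ^ 2 + ω 1 3 ^ 2 + ω 2 3 ^ 2)) • 1
      + (2 * pfaffian ω) • cliffordVolume c := by
  rw [hc.bivector_eq hω, cliffordVolume, pfaffian]
  simp only [smul_mul_assoc, mul_smul_comm, add_mul, mul_add, mul_assoc, hc.mul_mul_self_left,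
    hc.mul_mul_comm_of_lt, hc.mul_self, hc.mul_comm_of_lt, Fin.reduceLT, neg_neg, mul_neg, mul_one,
    smul_neg]
  match_scalars <;> ring

end Dim4

end CliffordRelations

namespace CliffordRelations

variable {K V : Type*} [Field K] [CharZero K] [AddCommGroup V] [Module K V] [FiniteDimensional K V]
  {c : Fin 4 → End K V} (hc : CliffordRelations K c)
include hc

theorem trace_mul_of_ne {i j : Fin 4} (h : i ≠ j) : trace K V (c i * c j) = 0 :=
  trace_eq_zero_of_mul_eq_neg_mul (hc.isUnit i) <| by
    rw [hc.mul_mul_self_left, hc.mul_comm_of_ne h, neg_mul, mul_assoc, hc.mul_self, mul_neg_one,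
      neg_neg]

theorem trace_volume : trace K V (cliffordVolume c) = 0 :=
  trace_eq_zero_of_mul_eq_neg_mul (hc.isUnit 0) (hc.mul_volume 0)

theorem trace_mul_mul_volume (i j : Fin 4) : trace K V (c i * c j * cliffordVolume c) = 0 := by
  -- `c k` with `k ∉ {i, j}` commutes with `c i * c j` and anticommutes with the volume element
  obtain ⟨k, hki, hkj⟩ : ∃ k, k ≠ i ∧ k ≠ j := by revert i j; decide
  refine trace_eq_zero_of_mul_eq_neg_mul (hc.isUnit k) ?_
  simp only [mul_assoc, hc.mul_mul_comm_of_ne hki, hc.mul_mul_comm_of_ne hkj, hc.mul_volume k,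
    mul_neg, neg_neg]

theorem trace_bivector {ω : Fin 4 → Fin 4 → K} (hω : ∀ i, ω i i = 0) :
    trace K V (cliffordBivector c ω) = 0 := by
  simp only [cliffordBivector, map_smul, map_sum]
  refine smul_eq_zero_of_right _ (Finset.sum_eq_zero fun i _ => Finset.sum_eq_zero fun j _ => ?_)
  rcases eq_or_ne i j with rfl | h
  · rw [hω, zero_smul]
  · rw [hc.trace_mul_of_ne h, smul_zero]

theorem trace_bivector_mul_volume (ω : Fin 4 → Fin 4 → K) :
    trace K V (cliffordBivector c ω * cliffordVolume c) = 0 := by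
  simp only [cliffordBivector, smul_mul_assoc, Finset.sum_mul, map_smul, map_sum,
    hc.trace_mul_mul_volume, smul_zero, Finset.sum_const_zero]

end CliffordRelations

section Hodge

variable {ω : Fin 4 → Fin 4 → ℝ} (hω : ∀ i j, ω i j = -ω j i)
include hω

theorem hodge_eq : hodge ω = ![![0, -ω 2 3, ω 1 3, -ω 1 2], ![ω 2 3, 0, -ω 0 3, ω 0 2],
    ![-ω 1 3, ω 0 3, 0, -ω 0 1], ![ω 1 2, -ω 0 2, ω 0 1, 0]] := by
  ext i j
  fin_cases i <;> fin_cases j <;>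
    simp [hodge, eps4, Fin.sum_univ_four, hω 1 0, hω 2 0, hω 3 0, hω 2 1, hω 3 1, hω 3 2] <;>
    ring

theorem four_mul_normSq2_sdPart : 4 * normSq2 (sdPart ω) =
    ω 0 1 ^ 2 + ω 0 2 ^ 2 + ω 0 3 ^ 2 + ω 1 2 ^ 2 + ω 1 3 ^ 2 + ω 2 3 ^ 2 - 2 * pfaffian ω := by
  have hdiag (i : Fin 4) : ω i i = 0 := by linarith [hω i i]
  simp [normSq2, sdPart, hodge_eq hω, Fin.sum_univ_four, hdiag, hω 1 0, hω 2 0, hω 3 0, hω 2 1,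
    hω 3 1, hω 3 2, pfaffian]
  ring

theorem four_mul_normSq2_asdPart : 4 * normSq2 (asdPart ω) =
    ω 0 1 ^ 2 + ω 0 2 ^ 2 + ω 0 3 ^ 2 + ω 1 2 ^ 2 + ω 1 3 ^ 2 + ω 2 3 ^ 2 + 2 * pfaffian ω := by
  have hdiag (i : Fin 4) : ω i i = 0 := by linarith [hω i i]
  simp [normSq2, asdPart, hodge_eq hω, Fin.sum_univ_four, hdiag, hω 1 0, hω 2 0, hω 3 0, hω 2 1,
    hω 3 1, hω 3 2, pfaffian]
  ring

end Hodge

/-- In the Clifford algebra `Cl(ℝ⁴)` acting on the 4-dimensional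
complex spinor space `Δ₄`, the determinant of `a + ω + f·e₁₂₃₄` equals
`[(a+f)² + 4‖ω₊‖²]·[(a−f)² + 4‖ω₋‖²]`.  Here `Δ₄` is modelled as a
4-dimensional complex module with Clifford multiplications `c i` by the basis
vectors, a 2-form `ω` acts as `(1/2) Σ_{ij} ω_{ij} cᵢ cⱼ`, and the volume form
`e₁₂₃₄` acts as `c₀ c₁ c₂ c₃`. -/
theorem det_clifford_element_dim_four
    (Δ : Type*) [AddCommGroup Δ] [Module ℂ Δ]
    (hdim : Module.finrank ℂ Δ = 4)
    (c : Fin 4 → Module.End ℂ Δ)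
    (hrel : ∀ i j : Fin 4,
        c i * c j + c j * c i = if i = j then (-2 : ℂ) • 1 else 0)
    (a f : ℝ) (ω : Fin 4 → Fin 4 → ℝ)
    (hω : ∀ i j, ω i j = - ω j i) :
    LinearMap.det
        ((a : ℂ) • (1 : Module.End ℂ Δ)
          + (1 / 2 : ℂ) • ∑ i : Fin 4, ∑ j : Fin 4,
              ((ω i j : ℝ) : ℂ) • (c i * c j)
          + (f : ℂ) • (c 0 * c 1 * c 2 * c 3))
      = ((((a + f) ^ 2 + 4 * normSq2 (sdPart ω))
          * ((a - f) ^ 2 + 4 * normSq2 (asdPart ω)) : ℝ) : ℂ) := by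
  have : FiniteDimensional ℂ Δ := Module.finite_of_finrank_eq_succ hdim
  have hc : CliffordRelations ℂ c := hrel
  set ωℂ : Fin 4 → Fin 4 → ℂ := fun i j => (ω i j : ℂ)
  have hωℂ (i j : Fin 4) : ωℂ i j = -ωℂ j i := by simp [ωℂ, hω i j]
  have hdiag (i : Fin 4) : ωℂ i i = 0 := by linear_combination hωℂ i i / 2
  refine (det_smul_one_add_add_smul_of_involution hdim hc.volume_mul_self
    (hc.commute_volume_bivector ωℂ) (hc.bivector_mul_self hωℂ) hc.trace_volume
    (hc.trace_bivector hdiag) (hc.trace_bivector_mul_volume ωℂ) a f).trans ?_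
  rw [four_mul_normSq2_sdPart hω, four_mul_normSq2_asdPart hω]
  push_cast [ωℂ, pfaffian]
  ring
end

section
/- The antisymmetric prolongation of the 16-dimensional spin representation of spin(9) vanishes: if T ∈ Λ³(ℝ¹⁶) is a 3-form such that X ⌟ T lies in the subalgebra spin(9) ⊂ so(16) for every X ∈ ℝ¹⁶, then T = 0. -/
/-- The antisymmetric prolongation of the 16-dimensional spin
representation of `spin(9)` vanishes: if `T ∈ Λ³(ℝ¹⁶)` is a 3-form such that
`X ⌟ T ∈ spin(9) ⊂ so(16)` for every `X ∈ ℝ¹⁶`, then `T = 0`.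
Here `spin(9) ⊂ so(16)` is realised, via its unique irreducible 16-dimensional
real spin representation, as the span of the products `γᵢ γⱼ` (`i ≠ j`) of
symmetric gamma matrices `γ : Fin 9 → Matrix (Fin 16) (Fin 16) ℝ` satisfying
the Clifford relations `γᵢγⱼ + γⱼγᵢ = 2δᵢⱼ`. -/
theorem spin9_antisymmetric_prolongation_vanishes
    (γ : Fin 9 → Matrix (Fin 16) (Fin 16) ℝ)
    (hsymm : ∀ i, (γ i).transpose = γ i)
    (hrel : ∀ i j : Fin 9,
        γ i * γ j + γ j * γ i = if i = j then (2 : ℝ) • 1 else 0)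
    (T : Fin 16 → Fin 16 → Fin 16 → ℝ)
    (halt : ∀ i j k : Fin 16, T i j k = - T j i k ∧ T i j k = - T i k j)
    (hT : ∀ X : Fin 16 → ℝ,
        matT 16 T X ∈ Submodule.span ℝ
          {B : Matrix (Fin 16) (Fin 16) ℝ | ∃ i j : Fin 9, i ≠ j ∧ B = γ i * γ j}) :
    ∀ i j k : Fin 16, T i j k = 0 := by
  classical
  -- basic consequences of the Clifford relations
  have hsq : ∀ p : Fin 9, γ p * γ p = 1 := by
    intro p
    have h := hrel p p
    rw [if_pos rfl] at h
    have h2 : (2:ℝ) • (γ p * γ p) = (2:ℝ) • (1 : Matrix (Fin 16) (Fin 16) ℝ) := by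
      rw [two_smul ℝ (γ p * γ p)]; exact h
    exact smul_right_injective _ (two_ne_zero (α := ℝ)) h2
  have hanti : ∀ p q : Fin 9, p ≠ q → γ p * γ q = -(γ q * γ p) := by
    intro p q hpq
    have h := hrel p q
    rw [if_neg hpq] at h
    exact eq_neg_of_add_eq_zero_left h
  -- the key conjugation identity on generators:  ∑ₚ γₚ (γₐ γ_b) γₚ = 5 γₐ γ_b
  have key : ∀ a b : Fin 9, a ≠ b →
      ∑ p, γ p * (γ a * γ b) * γ p = (5:ℝ) • (γ a * γ b) := by
    intro a b hab
    have hterm : ∀ p : Fin 9, γ p * (γ a * γ b) * γ p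
        = (if p = a then (-2:ℝ) • (γ a * γ b) else 0)
          + (if p = b then (-2:ℝ) • (γ a * γ b) else 0) + γ a * γ b := by
      intro p
      by_cases hpa : p = a
      · subst hpa
        rw [if_pos rfl, if_neg hab]
        rw [← mul_assoc, hsq, one_mul, hanti b p (Ne.symm hab)]
        module
      · by_cases hpb : p = b
        · subst hpb
          rw [if_neg hpa, if_pos rfl]
          rw [mul_assoc, mul_assoc, hsq, mul_one, hanti p a (fun h => hpa h)]
          module
        · rw [if_neg hpa, if_neg hpb]
          calc γ p * (γ a * γ b) * γ p
              = (γ p * γ a) * (γ b * γ p) := by noncomm_ring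
            _ = (-(γ a * γ p)) * (-(γ p * γ b)) := by
                rw [hanti p a hpa, hanti b p (fun h => hpb h.symm)]
            _ = γ a * (γ p * γ p) * γ b := by noncomm_ring
            _ = γ a * γ b := by rw [hsq, mul_one]
            _ = 0 + 0 + γ a * γ b := by simp
    calc ∑ p, γ p * (γ a * γ b) * γ p
        = ∑ p : Fin 9, ((if p = a then (-2:ℝ) • (γ a * γ b) else 0)
          + (if p = b then (-2:ℝ) • (γ a * γ b) else 0) + γ a * γ b) :=
          Finset.sum_congr rfl fun p _ => hterm p
      _ = (-2:ℝ) • (γ a * γ b) + (-2:ℝ) • (γ a * γ b) + (9:ℕ) • (γ a * γ b) := by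
          rw [Finset.sum_add_distrib, Finset.sum_add_distrib,
            Finset.sum_ite_eq' Finset.univ a, Finset.sum_ite_eq' Finset.univ b,
            if_pos (Finset.mem_univ a), if_pos (Finset.mem_univ b),
            Finset.sum_const, Finset.card_univ, Fintype.card_fin]
      _ = (5:ℝ) • (γ a * γ b) := by module
  -- the conjugation identity on the whole of spin(9)
  have hspan : ∀ A ∈ Submodule.span ℝ
      {B : Matrix (Fin 16) (Fin 16) ℝ | ∃ i j : Fin 9, i ≠ j ∧ B = γ i * γ j},
      ∑ p, γ p * A * γ p = (5:ℝ) • A := by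
    intro A hA
    induction hA using Submodule.span_induction with
    | mem B hB =>
        obtain ⟨a, b, hab, rfl⟩ := hB
        exact key a b hab
    | zero => simp
    | add B C _ _ hB hC =>
        rw [smul_add, ← hB, ← hC, ← Finset.sum_add_distrib]
        exact Finset.sum_congr rfl fun p _ => by rw [Matrix.mul_add, Matrix.add_mul]
    | smul c B _ hB =>
        rw [smul_comm, ← hB, Finset.smul_sum]
        exact Finset.sum_congr rfl fun p _ => by rw [Matrix.mul_smul, Matrix.smul_mul]
  -- the slices of T
  set t : Fin 16 → Matrix (Fin 16) (Fin 16) ℝ := fun m => Matrix.of fun a b => T m a b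
    with htdef
  have ht : ∀ m a b, t m a b = T m a b := fun _ _ _ => rfl
  have hmem : ∀ m, t m ∈ Submodule.span ℝ
      {B : Matrix (Fin 16) (Fin 16) ℝ | ∃ i j : Fin 9, i ≠ j ∧ B = γ i * γ j} := by
    intro m
    have h := hT (Pi.single m 1)
    have he : Matrix.of (fun j k => ∑ i, (Pi.single m 1 : Fin 16 → ℝ) i * T i j k) = t m := by
      ext a b
      simp [Pi.single_apply, ite_mul, htdef]
    rw [matT] at h
    rwa [he] at h
  have he23 : ∀ m, ∑ p, γ p * t m * γ p = (5:ℝ) • t m := fun m => hspan (t m) (hmem m)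
  -- symmetry and antisymmetry bookkeeping
  have hgs : ∀ p (x y : Fin 16), γ p x y = γ p y x := by
    intro p x y
    nth_rewrite 1 [← hsymm p]
    rw [Matrix.transpose_apply]
  have hcyc : ∀ a b c, T a b c = T c a b := by
    intro a b c
    rw [(halt a b c).2, (halt a c b).1, neg_neg]
  -- the scalar (entrywise) form of the conjugation identity
  have hS : ∀ m j k, ∑ p : Fin 9, ∑ x : Fin 16, ∑ a : Fin 16,
      γ p j a * T m a x * γ p x k = 5 * T m j k := by
    intro m j k
    have h : (∑ p, γ p * t m * γ p) j k = ((5:ℝ) • t m) j k := by rw [he23 m]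
    simp only [Matrix.sum_apply, Matrix.mul_apply, Matrix.smul_apply, smul_eq_mul, ht] at h
    rw [← h]
    refine Finset.sum_congr rfl fun p _ => ?_
    refine Finset.sum_congr rfl fun x _ => ?_
    rw [Finset.sum_mul]
  -- the conjugation identity in the other two index pairs
  have he13 : ∀ i, (∑ p : Fin 9, ∑ a : Fin 16, γ p i a • (t a * γ p)) = (5:ℝ) • t i := by
    intro i
    ext j k
    simp only [Matrix.sum_apply, Matrix.smul_apply, Matrix.mul_apply, smul_eq_mul, ht]
    have h1 : ∀ p : Fin 9, ∀ a : Fin 16, (γ p i a * ∑ b, T a j b * γ p b k)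
        = -∑ b, γ p i a * T j a b * γ p b k := by
      intro p a
      rw [Finset.mul_sum, ← Finset.sum_neg_distrib]
      exact Finset.sum_congr rfl fun b _ => by rw [(halt a j b).1]; ring
    calc ∑ p : Fin 9, ∑ a : Fin 16, γ p i a * ∑ b, T a j b * γ p b k
        = ∑ p : Fin 9, ∑ a : Fin 16, -∑ b, γ p i a * T j a b * γ p b k :=
          Finset.sum_congr rfl fun p _ => Finset.sum_congr rfl fun a _ => h1 p a
      _ = -∑ p : Fin 9, ∑ a : Fin 16, ∑ b, γ p i a * T j a b * γ p b k := by
          simp [Finset.sum_neg_distrib]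
      _ = -∑ p : Fin 9, ∑ b : Fin 16, ∑ a, γ p i a * T j a b * γ p b k := by
          rw [neg_inj]
          exact Finset.sum_congr rfl fun p _ => Finset.sum_comm
      _ = -(5 * T j i k) := by rw [hS j i k]
      _ = 5 * T i j k := by rw [(halt j i k).1]; ring
  have he12 : ∀ i, (∑ p : Fin 9, ∑ a : Fin 16, γ p i a • (γ p * t a)) = (5:ℝ) • t i := by
    intro i
    ext j k
    simp only [Matrix.sum_apply, Matrix.smul_apply, Matrix.mul_apply, smul_eq_mul, ht]
    have h1 : ∀ p : Fin 9, ∀ a : Fin 16, (γ p i a * ∑ b, γ p j b * T a b k)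
        = ∑ b, γ p i a * T k a b * γ p b j := by
      intro p a
      rw [Finset.mul_sum]
      exact Finset.sum_congr rfl fun b _ => by
        rw [hcyc a b k, hgs p j b]; ring
    calc ∑ p : Fin 9, ∑ a : Fin 16, γ p i a * ∑ b, γ p j b * T a b k
        = ∑ p : Fin 9, ∑ a : Fin 16, ∑ b, γ p i a * T k a b * γ p b j :=
          Finset.sum_congr rfl fun p _ => Finset.sum_congr rfl fun a _ => h1 p a
      _ = ∑ p : Fin 9, ∑ b : Fin 16, ∑ a, γ p i a * T k a b * γ p b j :=
          Finset.sum_congr rfl fun p _ => Finset.sum_comm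
      _ = 5 * T k i j := hS k i j
      _ = 5 * T i j k := by rw [← hcyc i j k]
  -- the final combination: 50 • t i = 10 • t i, hence t i = 0
  have hzero : ∀ i, t i = 0 := by
    intro i
    have hq1 : ∀ q, ∑ p : Fin 9, ∑ a : Fin 16, γ p i a • (γ q * (t a * γ p) * γ q)
        = (5:ℝ) • (γ q * t i * γ q) := by
      intro q
      have h := congrArg (fun M => γ q * M * γ q) (he13 i)
      simpa only [Matrix.mul_sum, Finset.sum_mul, mul_smul_comm, smul_mul_assoc] using h
    have hS1 : (∑ p : Fin 9, ∑ q : Fin 9, ∑ a : Fin 16,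
        γ p i a • (γ q * t a * (γ p * γ q))) = (25:ℝ) • t i := by
      rw [Finset.sum_comm]
      calc ∑ q : Fin 9, ∑ p : Fin 9, ∑ a : Fin 16, γ p i a • (γ q * t a * (γ p * γ q))
          = ∑ q : Fin 9, ∑ p : Fin 9, ∑ a : Fin 16, γ p i a • (γ q * (t a * γ p) * γ q) := by
            refine Finset.sum_congr rfl fun q _ => Finset.sum_congr rfl fun p _ =>
              Finset.sum_congr rfl fun a _ => ?_
            congr 1
            noncomm_ring
        _ = ∑ q : Fin 9, (5:ℝ) • (γ q * t i * γ q) := Finset.sum_congr rfl fun q _ => hq1 q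
        _ = (5:ℝ) • ∑ q : Fin 9, γ q * t i * γ q := by rw [Finset.smul_sum]
        _ = (25:ℝ) • t i := by rw [he23 i, smul_smul]; norm_num
    have hS2 : (∑ p : Fin 9, ∑ q : Fin 9, ∑ a : Fin 16,
        γ p i a • (γ q * t a * (γ q * γ p))) = (25:ℝ) • t i := by
      calc ∑ p : Fin 9, ∑ q : Fin 9, ∑ a : Fin 16, γ p i a • (γ q * t a * (γ q * γ p))
          = ∑ p : Fin 9, ∑ a : Fin 16, ∑ q : Fin 9, γ p i a • ((γ q * t a * γ q) * γ p) := by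
            refine Finset.sum_congr rfl fun p _ => ?_
            rw [Finset.sum_comm]
            refine Finset.sum_congr rfl fun a _ => Finset.sum_congr rfl fun q _ => ?_
            congr 1
            noncomm_ring
        _ = ∑ p : Fin 9, ∑ a : Fin 16, γ p i a • (((5:ℝ) • t a) * γ p) := by
            refine Finset.sum_congr rfl fun p _ => Finset.sum_congr rfl fun a _ => ?_
            rw [← Finset.smul_sum, ← Finset.sum_mul, he23 a]
        _ = (5:ℝ) • ∑ p : Fin 9, ∑ a : Fin 16, γ p i a • (t a * γ p) := by
            rw [Finset.smul_sum]
            refine Finset.sum_congr rfl fun p _ => ?_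
            rw [Finset.smul_sum]
            refine Finset.sum_congr rfl fun a _ => ?_
            rw [smul_mul_assoc, smul_comm]
        _ = (25:ℝ) • t i := by rw [he13 i, smul_smul]; norm_num
    have hS12 : (∑ p : Fin 9, ∑ q : Fin 9, ∑ a : Fin 16,
          γ p i a • (γ q * t a * (γ p * γ q)))
        + (∑ p : Fin 9, ∑ q : Fin 9, ∑ a : Fin 16,
          γ p i a • (γ q * t a * (γ q * γ p))) = (10:ℝ) • t i := by
      rw [← Finset.sum_add_distrib]
      calc ∑ p : Fin 9, (∑ q : Fin 9, ∑ a : Fin 16, γ p i a • (γ q * t a * (γ p * γ q))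
            + ∑ q : Fin 9, ∑ a : Fin 16, γ p i a • (γ q * t a * (γ q * γ p)))
          = ∑ p : Fin 9, ∑ a : Fin 16, ∑ q : Fin 9,
              γ p i a • (γ q * t a * (γ p * γ q + γ q * γ p)) := by
            refine Finset.sum_congr rfl fun p _ => ?_
            rw [← Finset.sum_add_distrib, Finset.sum_comm]
            refine Finset.sum_congr rfl fun a _ => ?_
            rw [← Finset.sum_add_distrib]
            refine Finset.sum_congr rfl fun q _ => ?_
            rw [← smul_add, ← mul_add]
        _ = ∑ p : Fin 9, ∑ a : Fin 16, ∑ q : Fin 9,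
              (if q = p then (2:ℝ) • (γ p i a • (γ p * t a)) else 0) := by
            refine Finset.sum_congr rfl fun p _ => Finset.sum_congr rfl fun a _ =>
              Finset.sum_congr rfl fun q _ => ?_
            rw [hrel p q]
            by_cases h : p = q
            · subst h
              rw [if_pos rfl, if_pos rfl, mul_smul_comm, mul_one, smul_comm]
            · rw [if_neg h, if_neg (fun hh => h hh.symm), mul_zero, smul_zero]
        _ = ∑ p : Fin 9, ∑ a : Fin 16, (2:ℝ) • (γ p i a • (γ p * t a)) := by
            refine Finset.sum_congr rfl fun p _ => Finset.sum_congr rfl fun a _ => ?_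
            rw [Finset.sum_ite_eq' Finset.univ p, if_pos (Finset.mem_univ p)]
        _ = (2:ℝ) • ∑ p : Fin 9, ∑ a : Fin 16, γ p i a • (γ p * t a) := by
            rw [Finset.smul_sum]
            exact Finset.sum_congr rfl fun p _ => by rw [Finset.smul_sum]
        _ = (10:ℝ) • t i := by rw [he12 i, smul_smul]; norm_num
    have h50 : (50:ℝ) • t i = (10:ℝ) • t i := by
      rw [← hS12, hS1, hS2]
      module
    have := sub_eq_zero_of_eq h50
    rw [← sub_smul] at this
    norm_num at this
    exact this
  intro i j k
  have h := congrFun (congrFun (hzero i) j) k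
  rw [ht i j k] at h
  simpa using h
end
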